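/- arXiv:1908.10853 — 4 statements merged into one kernel-verified Lean document; each statement's English description precedes it below -/
import Mathlib

section
/- Let G be an ordinary oriented graph and A a finite abelian group such that G has a nowhere-zero A-flow. If v is a vertex of degree at most 3 and γ: δ(v) → A \ {0} satisfies ∂γ(v) = 0, then there exists a nowhere-zero A-flow φ of G with φ(e) = γ(e) for every edge e incident with v. -/
open scoped Classical

noncomputable section

/-- A finite directed multigraph. -/
structure Digraph' where
  V : Type
  E : Type
  [fV : Fintype V]
  [fE : Fintype E]
  src : E → V
  tgt : E → V

attribute [instance] Digraph'.fV Digraph'.fE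

namespace Digraph'

variable (G : Digraph')

/-- The net flow (boundary) of an edge labelling at a vertex:
outgoing minus incoming. -/
def netFlow {A : Type} [AddCommGroup A] (φ : G.E → A) (v : G.V) : A :=
  (∑ e : G.E, if G.src e = v then φ e else 0) -
    ∑ e : G.E, if G.tgt e = v then φ e else 0

def IsFlow {A : Type} [AddCommGroup A] (φ : G.E → A) : Prop :=
  ∀ v, G.netFlow φ v = 0

def IsNZFlow {A : Type} [AddCommGroup A] (φ : G.E → A) : Prop :=
  G.IsFlow φ ∧ ∀ e, φ e ≠ 0

end Digraph'

namespace Digraph'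

def degree (G : Digraph') (v : G.V) : ℕ :=
  Set.ncard {e | G.src e = v} + Set.ncard {e | G.tgt e = v}

end Digraph'

/-!
Count the nowhere-zero flows that agree with `γ` on the edges at `v`. Deleting and contracting
the edges away from `v` one at a time, this count satisfies the same recursion for every `γ`,
and it bottoms out in quotient graphs in which only the edges at `v` are left. There `γ` extends
to a flow iff, for each class of the quotient, the values of `γ` on the edges from `v` into that
class sum to zero. As `v` has at most three non-loop edges, on which `γ` is nonzero with zero
sum, no proper nonempty subfamily of them has zero sum; so this condition depends only on the
quotient, not on `γ`. Hence `γ` has as many extensions as the restriction to the edges at `v`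
of a given nowhere-zero flow, and that flow is one of the latter.
-/

open Finset Function

lemma sum_eq_zero_iff_eq_empty_or_eq_of_card_le_three {ι M : Type*} [AddCommGroup M]
    {s t : Finset ι} {f : ι → M} (hts : t ⊆ s) (hs : #s ≤ 3) (hf : ∀ i ∈ s, f i ≠ 0)
    (hsum : ∑ i ∈ s, f i = 0) : ∑ i ∈ t, f i = 0 ↔ t = ∅ ∨ t = s := by
  refine ⟨fun ht => ?_, by rintro (rfl | rfl) <;> simp [hsum]⟩
  by_contra! hne
  have hsd : ∑ i ∈ s \ t, f i = 0 := by rw [sum_sdiff_eq_sub hts, hsum, ht, sub_zero]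
  -- `t` and `s \ t` are nonempty, so one of them is a singleton
  have hsingle : #t = 1 ∨ #(s \ t) = 1 := by
    have h₁ := card_pos.2 hne.1
    have h₂ := card_lt_card (Finset.ssubset_iff_subset_ne.2 ⟨hts, hne.2⟩)
    rw [card_sdiff_of_subset hts]
    omega
  rcases hsingle with h | h <;> obtain ⟨i, hi⟩ := card_eq_one.1 h
  · exact hf i (hts (by simp [hi])) (by simpa [hi] using ht)
  · exact hf i (sdiff_subset (hi ▸ mem_singleton_self i)) (by simpa [hi] using hsd)

section Extension

variable {E A : Type} [Zero A] {F L : Finset E} {γ φ : E → A} {e : E}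

def IsExtension (F L : Finset E) (γ φ : E → A) : Prop :=
  (∀ x ∈ F, φ x = γ x) ∧ ∀ x ∉ F, (φ x ≠ 0 ↔ x ∈ L)

lemma IsExtension.apply_eq_zero (h : IsExtension F L γ φ) (heF : e ∉ F) (heL : e ∉ L) :
    φ e = 0 := by
  simpa [heL] using h.2 e heF

lemma IsExtension.update_zero_eq (h : IsExtension F L γ φ) (heF : e ∉ F)
    (heL : e ∉ L) : update φ e 0 = φ :=
  update_eq_self_iff.2 (h.apply_eq_zero heF heL).symm

lemma isExtension_insert_iff (heF : e ∉ F) (heL : e ∉ L) :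
    IsExtension F (insert e L) γ φ ↔ IsExtension F L γ (update φ e 0) ∧ φ e ≠ 0 := by
  unfold IsExtension
  grind

lemma isExtension_iff_update_zero (heF : e ∉ F) (heL : e ∉ L) :
    IsExtension F L γ φ ↔ IsExtension F L γ (update φ e 0) ∧ φ e = 0 := by
  unfold IsExtension
  grind

end Extension

namespace Digraph'

variable {G : Digraph'} {A : Type} [AddCommGroup A]

variable (G) in
/-- The net flow out of the fibre `π ⁻¹' {w}`, i.e. at `w` in the graph obtained from `G` by
identifying vertices with the same image under `π`. -/
def quotNetFlow (π : G.V → G.V) (φ : G.E → A) (w : G.V) : A :=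
  ∑ e, ((if π (G.src e) = w then φ e else 0) - if π (G.tgt e) = w then φ e else 0)

variable (G) in
def IsQuotFlow (π : G.V → G.V) (φ : G.E → A) : Prop :=
  ∀ w, G.quotNetFlow π φ w = 0

lemma quotNetFlow_id (φ : G.E → A) : G.quotNetFlow id φ = G.netFlow φ := by
  funext w
  simp [quotNetFlow, netFlow, sum_sub_distrib]

lemma isQuotFlow_id {φ : G.E → A} : G.IsQuotFlow id φ ↔ G.IsFlow φ := by
  simp [IsQuotFlow, IsFlow, quotNetFlow_id]

lemma sum_quotNetFlow (π : G.V → G.V) (φ : G.E → A) : ∑ w, G.quotNetFlow π φ w = 0 := by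
  simp only [quotNetFlow]
  rw [sum_comm]
  simp [sum_sub_distrib]

lemma quotNetFlow_comp (g π : G.V → G.V) (φ : G.E → A) (w : G.V) :
    G.quotNetFlow (g ∘ π) φ w = ∑ u with g u = w, G.quotNetFlow π φ u := by
  simp only [quotNetFlow]
  rw [sum_comm]
  refine sum_congr rfl fun e _ => ?_
  simp [sum_sub_distrib, sum_ite_eq]

lemma IsQuotFlow.comp {π : G.V → G.V} {φ : G.E → A} (h : G.IsQuotFlow π φ) (g : G.V → G.V) :
    G.IsQuotFlow (g ∘ π) φ := fun w => by
  simp [quotNetFlow_comp, h _]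

lemma quotNetFlow_update (π : G.V → G.V) (φ : G.E → A) (e : G.E) (b : A) (w : G.V) :
    G.quotNetFlow π (update φ e b) w = G.quotNetFlow π φ w +
      ((if π (G.src e) = w then b - φ e else 0) - if π (G.tgt e) = w then b - φ e else 0) := by
  simp only [quotNetFlow]
  rw [Fintype.sum_eq_add_sum_compl e, Fintype.sum_eq_add_sum_compl e (f := fun x => _ - _)]
  rw [sum_congr rfl fun x hx => by rw [update_of_ne (by simpa using hx)], update_self]
  split_ifs <;> abel

lemma quotNetFlow_update_of_eq {π : G.V → G.V} {e : G.E} (he : π (G.src e) = π (G.tgt e))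
    (φ : G.E → A) (b : A) : G.quotNetFlow π (update φ e b) = G.quotNetFlow π φ := by
  funext w
  simp [quotNetFlow_update, he]

lemma isQuotFlow_update_of_eq {π : G.V → G.V} {e : G.E} (he : π (G.src e) = π (G.tgt e))
    {φ : G.E → A} {b : A} : G.IsQuotFlow π (update φ e b) ↔ G.IsQuotFlow π φ := by
  simp [IsQuotFlow, quotNetFlow_update_of_eq he]

/-- Undoing the contraction of `e`: the value put on `e` balances the fibre of its tail, and
then also the fibre of its head, since all net flows add up to zero. -/
lemma isQuotFlow_update_of_contract {π : G.V → G.V} {e : G.E}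
    (he : π (G.src e) ≠ π (G.tgt e)) {ψ : G.E → A}
    (hψ : G.IsQuotFlow (update id (π (G.src e)) (π (G.tgt e)) ∘ π) ψ) (he0 : ψ e = 0) :
    G.IsQuotFlow π (update ψ e (-G.quotNetFlow π ψ (π (G.src e)))) := by
  set s := π (G.src e)
  set t := π (G.tgt e)
  set q := G.quotNetFlow π ψ
  have hoff : ∀ w, w ≠ s ∧ w ≠ t → q w = 0 := fun w hw => by
    have hfibre : ({u | update id s t u = w} : Finset G.V) = {w} := by
      ext u
      simp only [mem_filter, mem_univ, true_and, mem_singleton, update_apply, id]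
      grind
    simpa [quotNetFlow_comp, hfibre] using hψ w
  have hst : q s + q t = 0 := by
    rw [← Fintype.sum_eq_add s t he hoff]
    exact sum_quotNetFlow π ψ
  intro w
  rw [quotNetFlow_update]
  change q w + ((if s = w then -q s - ψ e else 0) - if t = w then -q s - ψ e else 0) = 0
  rw [he0, sub_zero]
  split_ifs with hs ht ht
  · exact absurd (hs.trans ht.symm) he
  · rw [← hs]; abel
  · rw [← ht, zero_sub, neg_neg, add_comm, hst]
  · simpa using hoff w ⟨Ne.symm hs, Ne.symm ht⟩

section Extensions

variable [Fintype A]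

variable (G) in
/-- Flows of the minor of `G` obtained by identifying vertices along `π` and deleting the edges
outside `F ∪ L` (they carry the value `0`), agreeing with `γ` on `F` and nowhere zero on `L`. -/
def extensions (π : G.V → G.V) (F L : Finset G.E) (γ : G.E → A) : Finset (G.E → A) :=
  {φ | G.IsQuotFlow π φ ∧ IsExtension F L γ φ}

variable (G) in
/-- As `extensions π F L γ`, but with the edge `e` kept and allowed to carry any value. -/
def extensionsFreeAt (π : G.V → G.V) (F L : Finset G.E) (γ : G.E → A) (e : G.E) :
    Finset (G.E → A) :=
  {φ | G.IsQuotFlow π φ ∧ IsExtension F L γ (update φ e 0)}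

section DeletionContraction

variable {π : G.V → G.V} {F L : Finset G.E} {γ : G.E → A} {e : G.E}

lemma mem_extensions {φ : G.E → A} :
    φ ∈ G.extensions π F L γ ↔ G.IsQuotFlow π φ ∧ IsExtension F L γ φ := by
  simp [extensions]

lemma mem_extensionsFreeAt {φ : G.E → A} :
    φ ∈ G.extensionsFreeAt π F L γ e ↔ G.IsQuotFlow π φ ∧ IsExtension F L γ (update φ e 0) := by
  simp [extensionsFreeAt]

lemma card_extensions_empty :
    #(G.extensions π F ∅ γ) = if G.IsQuotFlow π ((F : Set G.E).indicator γ) then 1 else 0 := by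
  have hsingleton : G.extensions π F ∅ γ =
      ({(F : Set G.E).indicator γ} : Finset _).filter (G.IsQuotFlow π) := by
    ext φ
    simp only [mem_extensions, mem_filter, mem_singleton, IsExtension, funext_iff,
      Set.indicator_apply, mem_coe]
    grind
  rw [hsingleton, filter_singleton]
  split_ifs <;> rfl

lemma card_extensions_insert_add (heF : e ∉ F) (heL : e ∉ L) :
    #(G.extensions π F (insert e L) γ) + #(G.extensions π F L γ) =
      #(G.extensionsFreeAt π F L γ e) := by
  rw [← card_filter_add_card_filter_not (s := G.extensionsFreeAt π F L γ e) (fun φ => φ e ≠ 0)]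
  congr 2 <;> ext φ <;>
    simp only [mem_filter, mem_extensions, mem_extensionsFreeAt, not_not,
      isExtension_insert_iff heF heL, isExtension_iff_update_zero (φ := φ) heF heL] <;> tauto

lemma card_extensionsFreeAt_of_eq (heF : e ∉ F) (heL : e ∉ L) (he : π (G.src e) = π (G.tgt e)) :
    #(G.extensionsFreeAt π F L γ e) = Fintype.card A * #(G.extensions π F L γ) := by
  rw [← card_univ, ← card_product]
  refine card_nbij' (fun φ => (φ e, update φ e 0)) (fun p => update p.2 e p.1) ?_ ?_ ?_ ?_
  · intro φ hφ
    simp only [mem_coe, mem_extensionsFreeAt, mem_product, mem_univ, true_and,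
      mem_extensions, isQuotFlow_update_of_eq he] at hφ ⊢
    exact hφ
  · rintro ⟨b, ψ⟩ hψ
    simp only [mem_coe, mem_extensionsFreeAt, mem_product, mem_univ, true_and,
      mem_extensions, isQuotFlow_update_of_eq he, update_idem] at hψ ⊢
    rwa [hψ.2.update_zero_eq heF heL]
  · intro φ _
    simp
  · rintro ⟨b, ψ⟩ hψ
    simp only [mem_coe, mem_product, mem_extensions] at hψ
    simp [hψ.2.2.update_zero_eq heF heL]

lemma card_extensionsFreeAt_of_ne (heF : e ∉ F) (heL : e ∉ L) (he : π (G.src e) ≠ π (G.tgt e)) :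
    #(G.extensionsFreeAt π F L γ e) =
      #(G.extensions (update id (π (G.src e)) (π (G.tgt e)) ∘ π) F L γ) := by
  have hloop : (update id (π (G.src e)) (π (G.tgt e)) ∘ π) (G.src e) =
      (update id (π (G.src e)) (π (G.tgt e)) ∘ π) (G.tgt e) := by
    simp [Ne.symm he]
  refine card_nbij' (fun φ => update φ e 0)
    (fun ψ => update ψ e (-G.quotNetFlow π ψ (π (G.src e)))) ?_ ?_ ?_ ?_
  · intro φ hφ
    simp only [mem_coe, mem_extensionsFreeAt, mem_extensions] at hφ ⊢
    exact ⟨(isQuotFlow_update_of_eq hloop).2 (hφ.1.comp _), hφ.2⟩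
  · intro ψ hψ
    simp only [mem_coe, mem_extensionsFreeAt, mem_extensions, update_idem] at hψ ⊢
    exact ⟨isQuotFlow_update_of_contract he hψ.1 (hψ.2.apply_eq_zero heF heL),
      by rw [hψ.2.update_zero_eq heF heL]; exact hψ.2⟩
  · intro φ hφ
    simp only [mem_coe, mem_extensionsFreeAt] at hφ
    simp [quotNetFlow_update, hφ.1 _, Ne.symm he]
  · intro ψ hψ
    simp only [mem_coe, mem_extensions] at hψ
    simp [hψ.2.update_zero_eq heF heL]

end DeletionContraction

theorem card_extensions_congr {F : Finset G.E} {γ γ' : G.E → A}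
    (h : ∀ π, G.IsQuotFlow π ((F : Set G.E).indicator γ) ↔
      G.IsQuotFlow π ((F : Set G.E).indicator γ'))
    {L : Finset G.E} (hL : Disjoint F L) (π : G.V → G.V) :
    #(G.extensions π F L γ) = #(G.extensions π F L γ') := by
  induction L using Finset.induction_on generalizing π with
  | empty => simp only [card_extensions_empty, h π]
  | insert e L heL ih =>
    obtain ⟨heF, hL⟩ := disjoint_insert_right.1 hL
    have hγ := card_extensions_insert_add (π := π) (γ := γ) heF heL
    have hγ' := card_extensions_insert_add (π := π) (γ := γ') heF heL
    by_cases he : π (G.src e) = π (G.tgt e)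
    · rw [card_extensionsFreeAt_of_eq heF heL he] at hγ hγ'
      rw [ih hL π] at hγ
      omega
    · rw [card_extensionsFreeAt_of_ne heF heL he] at hγ hγ'
      rw [ih hL π, ih hL] at hγ
      omega

lemma mem_extensions_id_compl {F : Finset G.E} {γ φ : G.E → A} :
    φ ∈ G.extensions id F Fᶜ γ ↔ G.IsFlow φ ∧ (∀ e ∈ F, φ e = γ e) ∧ ∀ e ∉ F, φ e ≠ 0 := by
  simp +contextual [mem_extensions, isQuotFlow_id, IsExtension]

end Extensions

variable (G) in
def edgesAt (v : G.V) : Finset G.E := {e | G.src e = v ∨ G.tgt e = v}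

variable (G) in
def nonLoopEdgesAt (v : G.V) : Finset G.E := {e ∈ G.edgesAt v | G.src e ≠ G.tgt e}

variable (G) in
def outValue (v : G.V) (γ : G.E → A) (e : G.E) : A := if G.src e = v then γ e else -γ e

variable (G) in
def otherEnd (v : G.V) (e : G.E) : G.V := if G.src e = v then G.tgt e else G.src e

variable {v : G.V}

@[simp]
lemma mem_edgesAt {e : G.E} : e ∈ G.edgesAt v ↔ G.src e = v ∨ G.tgt e = v := by
  simp [edgesAt]

@[simp]
lemma mem_nonLoopEdgesAt {e : G.E} :
    e ∈ G.nonLoopEdgesAt v ↔ (G.src e = v ∨ G.tgt e = v) ∧ G.src e ≠ G.tgt e := by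
  simp [nonLoopEdgesAt]

lemma card_nonLoopEdgesAt_le : #(G.nonLoopEdgesAt v) ≤ G.degree v := by
  have hsub : G.nonLoopEdgesAt v ⊆
      ({e | G.src e = v} : Finset G.E) ∪ ({e | G.tgt e = v} : Finset G.E) := fun e he => by
    simpa using (mem_nonLoopEdgesAt.1 he).1
  calc #(G.nonLoopEdgesAt v)
      ≤ #({e | G.src e = v} : Finset G.E) + #({e | G.tgt e = v} : Finset G.E) :=
        (card_le_card hsub).trans (card_union_le _ _)
    _ = G.degree v := by simp [degree, Set.ncard_eq_toFinset_card']

lemma outValue_ne_zero {γ : G.E → A} {e : G.E} (h : γ e ≠ 0) : G.outValue v γ e ≠ 0 := by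
  unfold outValue; split_ifs <;> simpa

lemma netFlow_eq_sum_outValue (γ : G.E → A) :
    G.netFlow γ v = ∑ e ∈ G.nonLoopEdgesAt v, G.outValue v γ e := by
  rw [netFlow, ← sum_sub_distrib, ← univ_inter (G.nonLoopEdgesAt v), ← sum_ite_mem]
  refine sum_congr rfl fun e _ => ?_
  simp only [outValue, mem_nonLoopEdgesAt]
  split_ifs <;> grind

lemma quotNetFlow_indicator_edgesAt (π : G.V → G.V) (γ : G.E → A) (w : G.V) :
    G.quotNetFlow π ((G.edgesAt v : Set G.E).indicator γ) w =
      ∑ e ∈ G.nonLoopEdgesAt v,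
        ((if π v = w then G.outValue v γ e else 0) -
          if π (G.otherEnd v e) = w then G.outValue v γ e else 0) := by
  rw [← univ_inter (G.nonLoopEdgesAt v), ← sum_ite_mem, quotNetFlow]
  refine sum_congr rfl fun e _ => ?_
  simp only [outValue, otherEnd, Set.indicator_apply, mem_coe, mem_edgesAt, mem_nonLoopEdgesAt]
  split_ifs <;> grind

lemma isQuotFlow_indicator_edgesAt_iff {γ : G.E → A} (hv : #(G.nonLoopEdgesAt v) ≤ 3)
    (hγ0 : ∀ e, (G.src e = v ∨ G.tgt e = v) → γ e ≠ 0) (hγ : G.netFlow γ v = 0)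
    (π : G.V → G.V) :
    G.IsQuotFlow π ((G.edgesAt v : Set G.E).indicator γ) ↔
      ∀ w, {e ∈ G.nonLoopEdgesAt v | π (G.otherEnd v e) = w} = ∅ ∨
        {e ∈ G.nonLoopEdgesAt v | π (G.otherEnd v e) = w} = G.nonLoopEdgesAt v := by
  have hsum := (netFlow_eq_sum_outValue γ).symm.trans hγ
  refine forall_congr' fun w => ?_
  rw [quotNetFlow_indicator_edgesAt, sum_sub_distrib, sum_ite_irrel, sum_const_zero, hsum,
    ite_self, zero_sub, neg_eq_zero, ← sum_filter]
  exact sum_eq_zero_iff_eq_empty_or_eq_of_card_le_three (filter_subset _ _) hv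
    (fun e he => outValue_ne_zero (hγ0 e (mem_nonLoopEdgesAt.1 he).1)) hsum

end Digraph'

open Digraph'

/-- If `G` has a nowhere-zero `A`-flow and `v` has degree at most
3, then any nonzero assignment `γ` on the edges at `v` with zero boundary at
`v` extends to a nowhere-zero `A`-flow. -/
theorem flow_extension_at_small_vertex (G : Digraph') {A : Type}
    [AddCommGroup A] [Fintype A]
    (hA : ∃ φ : G.E → A, G.IsNZFlow φ)
    (v : G.V) (hv : G.degree v ≤ 3) (γ : G.E → A)
    (hγ0 : ∀ e, (G.src e = v ∨ G.tgt e = v) → γ e ≠ 0)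
    (hγ : G.netFlow γ v = 0) :
    ∃ φ : G.E → A, G.IsNZFlow φ ∧
      ∀ e, (G.src e = v ∨ G.tgt e = v) → φ e = γ e := by
  obtain ⟨φ₀, hφ₀, hφ₀0⟩ := hA
  have hN := card_nonLoopEdgesAt_le.trans hv
  have hcard := card_extensions_congr (F := G.edgesAt v) (γ := γ) (γ' := φ₀)
    (fun π => by rw [isQuotFlow_indicator_edgesAt_iff hN hγ0 hγ,
      isQuotFlow_indicator_edgesAt_iff hN (fun e _ => hφ₀0 e) (hφ₀ v)])
    disjoint_compl_right id
  obtain ⟨φ, hφ⟩ : (G.extensions id (G.edgesAt v) (G.edgesAt v)ᶜ γ).Nonempty := by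
    rw [← card_pos, hcard, card_pos]
    exact ⟨φ₀, mem_extensions_id_compl.2 ⟨hφ₀, fun _ _ => rfl, fun e _ => hφ₀0 e⟩⟩
  obtain ⟨hflow, hagree, hnz⟩ := mem_extensions_id_compl.1 hφ
  refine ⟨φ, ⟨hflow, fun e => ?_⟩, fun e he => hagree e (mem_edgesAt.2 he)⟩
  by_cases he : e ∈ G.edgesAt v
  · exact hagree e he ▸ hγ0 e (mem_edgesAt.1 he)
  · exact hnz e he
end
end

section
/- Every subgraph of a shrubbery is a shrubbery; in particular, the inequality (S3) |δ_{G'}(V(H))| + Σ_{x∈V(H)}(3 − d_{G'}(x)) + 2|𝒰_{G'}(H)| ≥ 4 holds for every balanced connected subgraph H with at least 2 vertices of any subgraph G' of a shrubbery G. -/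
open scoped Classical

noncomputable section

/-- A signed graph: a finite multigraph where each edge has two half-edges
(indexed by `Bool`) and a sign in `{1, -1}`. -/
structure SignedGraph where
  V : Type
  E : Type
  [fV : Fintype V]
  [fE : Fintype E]
  ends : E → Bool → V
  sign : E → ℤ
  sign_unit : ∀ e, sign e = 1 ∨ sign e = -1

attribute [instance] SignedGraph.fV SignedGraph.fE

namespace SignedGraph

variable (G : SignedGraph)

/-- An orientation assigns `±1` to each half-edge so that the product of the
two values on an edge is the negative of its sign. -/
def IsOrientation (τ : G.E → Bool → ℤ) : Prop :=
  (∀ e b, τ e b = 1 ∨ τ e b = -1) ∧ ∀ e, τ e true * τ e false = - G.sign e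

/-- The boundary of an edge labelling at a vertex. -/
def boundary {A : Type} [AddCommGroup A] (τ : G.E → Bool → ℤ)
    (f : G.E → A) (v : G.V) : A :=
  ∑ e : G.E, ∑ b : Bool, if G.ends e b = v then τ e b • f e else 0

/-- An `A`-flow: boundary vanishes at every vertex. -/
def IsFlow {A : Type} [AddCommGroup A] (τ : G.E → Bool → ℤ) (f : G.E → A) : Prop :=
  G.IsOrientation τ ∧ ∀ v, G.boundary τ f v = 0

/-- A nowhere-zero integer `k`-flow. -/
def IsNZkFlow (k : ℤ) (τ : G.E → Bool → ℤ) (f : G.E → ℤ) : Prop :=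
  G.IsFlow τ f ∧ ∀ e, 0 < |f e| ∧ |f e| < k

def FlowAdmissible : Prop := ∃ k : ℤ, 0 < k ∧ ∃ τ f, G.IsNZkFlow k τ f

/-- Adjacency through an edge of the edge set `S`. -/
def Adj (S : Set G.E) (u v : G.V) : Prop :=
  ∃ e ∈ S, ∃ b, G.ends e b = u ∧ G.ends e (!b) = v

/-- Reachability within the edge set `S`. -/
def Reach (S : Set G.E) : G.V → G.V → Prop := Relation.EqvGen (G.Adj S)

/-- `e` is a bridge of the subgraph induced by the edge set `S`. -/
def IsBridge (S : Set G.E) (e : G.E) : Prop :=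
  e ∈ S ∧ ¬ G.Reach (S \ {e}) (G.ends e true) (G.ends e false)

def IsCutEdge (e : G.E) : Prop := G.IsBridge Set.univ e

/-- The number of half-edges at `v`. -/
def degree (v : G.V) : ℕ := Set.ncard {p : G.E × Bool | G.ends p.1 p.2 = v}

/-- A circuit: a cyclic sequence of distinct edges on distinct vertices. -/
structure Circuit (G : SignedGraph) where
  n : ℕ
  hn : 0 < n
  edge : ZMod n → G.E
  dir : ZMod n → Bool
  edge_inj : Function.Injective edge
  vert_inj : Function.Injective fun i => G.ends (edge i) (dir i)
  link : ∀ i, G.ends (edge i) (!(dir i)) = G.ends (edge (i + 1)) (dir (i + 1))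

namespace Circuit

variable {G}

/-- The product of the signs of the edges of a circuit. -/
def csign (C : Circuit G) : ℤ :=
  letI : NeZero C.n := ⟨C.hn.ne'⟩
  ∏ i : ZMod C.n, G.sign (C.edge i)

def verts (C : Circuit G) : Set G.V :=
  Set.range fun i => G.ends (C.edge i) (C.dir i)

def edges (C : Circuit G) : Set G.E := Set.range C.edge

end Circuit

/-- A subgraph of a signed graph. -/
structure Subgraph (G : SignedGraph) where
  verts : Set G.V
  edges : Set G.E
  ends_mem : ∀ e ∈ edges, ∀ b, G.ends e b ∈ verts

namespace Subgraph

variable {G}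

/-- A subgraph regarded as a signed graph in its own right. -/
def toSignedGraph (H : Subgraph G) : SignedGraph where
  V := H.verts
  E := H.edges
  fV := H.verts.toFinite.fintype
  fE := H.edges.toFinite.fintype
  ends := fun e b => ⟨G.ends e.1 b, H.ends_mem e.1 e.2 b⟩
  sign := fun e => G.sign e.1
  sign_unit := fun e => G.sign_unit e.1

/-- A subgraph is balanced if every circuit lying in it has positive sign. -/
def Balanced (H : Subgraph G) : Prop :=
  ∀ C : Circuit G, (∀ i, C.edge i ∈ H.edges) → C.csign = 1

def Conn (H : Subgraph G) : Prop :=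
  ∀ u ∈ H.verts, ∀ v ∈ H.verts, G.Reach H.edges u v

/-- A chord of `H`: an edge outside `H` with both ends in `H`. -/
def IsChord (H : Subgraph G) (e : G.E) : Prop :=
  e ∉ H.edges ∧ ∀ b, G.ends e b ∈ H.verts

/-- The chords of `H` whose addition creates an unbalanced circuit. -/
def UChords (H : Subgraph G) : Set G.E :=
  {e | H.IsChord e ∧ ∃ C : Circuit G, C.csign = -1 ∧ (∃ i, C.edge i = e) ∧
    ∀ i, C.edge i = e ∨ C.edge i ∈ H.edges}

/-- The edges of `G` with exactly one end in `H.verts`. -/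
def edgeBoundary (H : Subgraph G) : Set G.E :=
  {e | Xor' (G.ends e true ∈ H.verts) (G.ends e false ∈ H.verts)}

end Subgraph

/-- The subgraph of a circuit. -/
def Circuit.toSubgraph {G : SignedGraph} (C : Circuit G) : Subgraph G where
  verts := C.verts
  edges := C.edges
  ends_mem := by
    rintro e ⟨i, rfl⟩ b
    by_cases hb : b = C.dir i
    · exact ⟨i, by rw [hb]⟩
    · have hb' : b = !(C.dir i) := by
        revert hb; cases b <;> cases C.dir i <;> simp
      rw [hb', C.link i]
      exact ⟨i + 1, rfl⟩

/-- The connected component (as a subgraph) of the spanning subgraph with edge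
set `S` containing the vertex `v₀`. -/
def componentOf (S : Set G.E) (v₀ : G.V) : Subgraph G where
  verts := {v | G.Reach S v₀ v}
  edges := {e | e ∈ S ∧ G.Reach S v₀ (G.ends e true)}
  ends_mem := by
    rintro e ⟨heS, hv⟩ b
    cases b
    · refine Relation.EqvGen.trans _ _ _ hv (Relation.EqvGen.rel _ _ ?_)
      exact ⟨e, heS, true, rfl, rfl⟩
    · exact hv

/-- The subgraph obtained by deleting a set of vertices (and all incident
edges). -/
def deleteVerts (W : Set G.V) : Subgraph G where
  verts := {v | v ∉ W}
  edges := {e | ∀ b, G.ends e b ∉ W}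
  ends_mem := fun e he b => he b

/-- Shrubbery conditions (S1)-(S4). -/
def IsShrubbery : Prop :=
  (∀ v, G.degree v ≤ 3) ∧
  (∀ H : Subgraph G, (∀ v, H.toSignedGraph.degree v = 3) →
      H.toSignedGraph.FlowAdmissible) ∧
  (∀ H : Subgraph G, H.Balanced → H.Conn → 2 ≤ H.verts.ncard →
      (4 : ℤ) ≤ (H.edgeBoundary.ncard : ℤ) +
        (∑ x ∈ H.verts.toFinite.toFinset, ((3 : ℤ) - (G.degree x : ℤ))) +
        2 * (H.UChords.ncard : ℤ)) ∧
  (¬ ∃ C : Circuit G, C.n = 4 ∧ C.csign = 1)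

/-- A nowhere-zero watering. -/
def IsWatering (τ : G.E → Bool → ℤ) (f : G.E → ZMod 2 × ZMod 3) : Prop :=
  G.IsOrientation τ ∧ (∀ e, f e ≠ 0) ∧
  ∀ v, (G.degree v = 3 → G.boundary τ f v = 0) ∧
    ((G.degree v = 1 ∨ G.degree v = 2) →
      G.boundary τ f v = (0, 1) ∨ G.boundary τ f v = (0, -1))

/-- A removable circuit. -/
def Circuit.Removable {G : SignedGraph} (C : Circuit G) : Prop :=
  C.csign = -1 ∨
    2 ≤ (C.toSubgraph.UChords).ncard + {v ∈ C.verts | G.degree v = 2}.ncard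

/-- A balanced nowhere-zero `ℤ₂ × ℤ₃`-flow: the support of the first component
contains an even number of negative edges. -/
def IsBalancedZ6NZF (τ : G.E → Bool → ℤ) (f : G.E → ZMod 2 × ZMod 3) : Prop :=
  G.IsFlow τ f ∧ (∀ e, f e ≠ 0) ∧
    Even {e | (f e).1 ≠ 0 ∧ G.sign e = -1}.ncard

/-- A path from `u` to `v` in a signed graph. -/
structure GPath (G : SignedGraph) (u v : G.V) where
  n : ℕ
  edge : Fin n → G.E
  dir : Fin n → Bool
  vseq : Fin (n + 1) → G.V
  vseq_inj : Function.Injective vseq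
  first : vseq 0 = u
  last : vseq (Fin.last n) = v
  edge_src : ∀ i : Fin n, G.ends (edge i) (dir i) = vseq i.castSucc
  edge_tgt : ∀ i : Fin n, G.ends (edge i) (!(dir i)) = vseq i.succ

namespace GPath

variable {G}

def psign {u v : G.V} (P : GPath G u v) : ℤ := ∏ i, G.sign (P.edge i)

def verts {u v : G.V} (P : GPath G u v) : Set G.V := Set.range P.vseq

def edges {u v : G.V} (P : GPath G u v) : Set G.E := Set.range P.edge

/-- Two `u,v`-paths are internally disjoint. -/
def IntDisjoint {u v : G.V} (P Q : GPath G u v) : Prop :=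
  P.verts ∩ Q.verts = {u, v} ∧ Disjoint P.edges Q.edges

end GPath

/-- `G` contains an unbalanced theta subgraph. -/
def HasUnbalancedTheta : Prop :=
  ∃ (u v : G.V) (_ : u ≠ v) (P₁ P₂ P₃ : GPath G u v),
    P₁.IntDisjoint P₂ ∧ P₁.IntDisjoint P₃ ∧ P₂.IntDisjoint P₃ ∧
    ¬(P₁.psign = P₂.psign ∧ P₂.psign = P₃.psign)

def HasNegLoop : Prop :=
  ∃ e, G.ends e true = G.ends e false ∧ G.sign e = -1

/-- The sign of `e` after switching at the vertex set `U`. -/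
def switchSign (U : Set G.V) (e : G.E) : ℤ :=
  if Xor' (G.ends e true ∈ U) (G.ends e false ∈ U) then -G.sign e else G.sign e

/-- The negativeness: minimum number of negative edges over equivalent
signatures. -/
def negativeness : ℕ :=
  sInf {n | ∃ U : Set G.V, n = {e | G.switchSign U e = -1}.ncard}

def IsBalanced : Prop := G.negativeness = 0

def Connected : Prop := ∀ u v, G.Reach Set.univ u v

def Loopless : Prop := ∀ e, G.ends e true ≠ G.ends e false

def TwoConnected : Prop :=
  G.Connected ∧
    ∀ x u w, u ≠ x → w ≠ x → G.Reach {e | ∀ b, G.ends e b ≠ x} u w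

end SignedGraph

namespace SignedGraph

section Iso
variable {G₁ G₂ : SignedGraph} (eV : G₁.V ≃ G₂.V) (eE : G₁.E ≃ G₂.E)

lemma degree_iso (hends : ∀ e b, G₂.ends (eE e) b = eV (G₁.ends e b)) (v : G₁.V) :
    G₂.degree (eV v) = G₁.degree v := by
  unfold degree
  rw [← Set.ncard_image_of_injective {p : G₁.E × Bool | G₁.ends p.1 p.2 = v}
    (f := fun p : G₁.E × Bool => (eE p.1, p.2))
    (fun p q hpq => by
      simp only [Prod.mk.injEq, EmbeddingLike.apply_eq_iff_eq] at hpq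
      exact Prod.ext hpq.1 hpq.2)]
  congr 1
  ext ⟨e, b⟩
  simp only [Set.mem_image, Set.mem_setOf_eq, Prod.exists, Prod.mk.injEq]
  constructor
  · intro he
    refine ⟨eE.symm e, b, ?_, by simp, rfl⟩
    apply eV.injective
    rw [← hends, Equiv.apply_symm_apply, he]
  · rintro ⟨ee, b', hee, h1, h2⟩
    subst h2
    rw [← h1, hends, hee]

lemma flowAdmissible_iso (hends : ∀ e b, G₂.ends (eE e) b = eV (G₁.ends e b))
    (hsign : ∀ e, G₂.sign (eE e) = G₁.sign e)
    (h : G₂.FlowAdmissible) : G₁.FlowAdmissible := by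
  obtain ⟨k, hk, τ, f, ⟨⟨hor, hbd⟩, hnz⟩⟩ := h
  refine ⟨k, hk, fun e b => τ (eE e) b, fun e => f (eE e),
    ⟨⟨⟨fun e b => hor.1 (eE e) b, fun e => by rw [← hsign]; exact hor.2 (eE e)⟩, fun v => ?_⟩,
      fun e => hnz (eE e)⟩⟩
  have : G₁.boundary (fun e b => τ (eE e) b) (fun e => f (eE e)) v
      = G₂.boundary τ f (eV v) := by
    unfold boundary
    refine Fintype.sum_equiv eE _ _ fun e => ?_
    refine Finset.sum_congr rfl fun b _ => ?_
    rw [hends, eV.injective.eq_iff]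
  rw [this, hbd]

end Iso

namespace Subgraph

variable {G : SignedGraph} (H : Subgraph G)

def pushCircuit (C : Circuit H.toSignedGraph) : Circuit G where
  n := C.n
  hn := C.hn
  edge i := (C.edge i).1
  dir := C.dir
  edge_inj a b hab := C.edge_inj (Subtype.ext hab)
  vert_inj a b hab := C.vert_inj (Subtype.ext hab)
  link i := congrArg Subtype.val (C.link i)

lemma pushCircuit_csign (C : Circuit H.toSignedGraph) :
    (H.pushCircuit C).csign = C.csign := rfl

def liftCircuit (C : Circuit G) (h : ∀ i, C.edge i ∈ H.edges) :
    Circuit H.toSignedGraph where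
  n := C.n
  hn := C.hn
  edge i := ⟨C.edge i, h i⟩
  dir := C.dir
  edge_inj a b hab := C.edge_inj (congrArg Subtype.val hab)
  vert_inj a b hab := C.vert_inj (congrArg Subtype.val hab)
  link i := Subtype.ext (C.link i)

lemma liftCircuit_csign (C : Circuit G) (h : ∀ i, C.edge i ∈ H.edges) :
    (H.liftCircuit C h).csign = C.csign := rfl

lemma degree_toSignedGraph (v : H.toSignedGraph.V) :
    H.toSignedGraph.degree v
      = Set.ncard {p : G.E × Bool | p.1 ∈ H.edges ∧ G.ends p.1 p.2 = v.1} := by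
  unfold degree
  rw [← Set.ncard_image_of_injective {p : H.toSignedGraph.E × Bool | H.toSignedGraph.ends p.1 p.2 = v}
    (f := fun p : H.toSignedGraph.E × Bool => ((p.1.1 : G.E), p.2))
    (fun p q hpq => by
      simp only [Prod.mk.injEq] at hpq
      exact Prod.ext (Subtype.ext hpq.1) hpq.2)]
  congr 1
  ext ⟨e, b⟩
  simp only [Set.mem_image, Set.mem_setOf_eq, Prod.exists, Prod.mk.injEq]
  constructor
  · rintro ⟨ee, b', hp, h1, h2⟩
    subst h1; subst h2
    exact ⟨ee.2, congrArg Subtype.val hp⟩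
  · rintro ⟨he, hv⟩
    exact ⟨⟨e, he⟩, b, Subtype.ext hv, rfl, rfl⟩

lemma degree_toSignedGraph_le (v : H.toSignedGraph.V) :
    H.toSignedGraph.degree v ≤ G.degree v.1 := by
  rw [degree_toSignedGraph]
  exact Set.ncard_le_ncard (fun p hp => hp.2) (Set.toFinite _)

def push (K : Subgraph H.toSignedGraph) : Subgraph G where
  verts := Subtype.val '' K.verts
  edges := Subtype.val '' K.edges
  ends_mem := by
    rintro e ⟨ee, hee, rfl⟩ b
    exact ⟨_, K.ends_mem ee hee b, rfl⟩

variable {H}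
variable {K : Subgraph H.toSignedGraph}

lemma mem_push_verts {x : H.toSignedGraph.V} :
    x.1 ∈ (H.push K).verts ↔ x ∈ K.verts :=
  Subtype.val_injective.mem_set_image

lemma mem_push_edges {e : H.toSignedGraph.E} :
    e.1 ∈ (H.push K).edges ↔ e ∈ K.edges :=
  Subtype.val_injective.mem_set_image

lemma reach_push {S : Set H.toSignedGraph.E} {u v : H.toSignedGraph.V}
    (h : H.toSignedGraph.Reach S u v) : G.Reach (Subtype.val '' S) u.1 v.1 := by
  induction h with
  | rel x y hxy =>
      obtain ⟨e, heS, b, h1, h2⟩ := hxy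
      exact Relation.EqvGen.rel _ _
        ⟨e.1, ⟨e, heS, rfl⟩, b, congrArg Subtype.val h1, congrArg Subtype.val h2⟩
  | refl x => exact Relation.EqvGen.refl _
  | symm x y _ ih => exact Relation.EqvGen.symm _ _ ih
  | trans x y z _ _ ih1 ih2 => exact Relation.EqvGen.trans _ _ _ ih1 ih2

lemma push_balanced (hK : K.Balanced) : (H.push K).Balanced := by
  intro C hC
  have hmem : ∀ i, C.edge i ∈ H.edges := fun i => by
    obtain ⟨ee, _, he⟩ := hC i; exact he ▸ ee.2
  rw [← H.liftCircuit_csign C hmem]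
  refine hK _ fun i => ?_
  exact mem_push_edges.mp (hC i)

lemma push_conn (hK : K.Conn) : (H.push K).Conn := by
  rintro u ⟨uu, huu, rfl⟩ v ⟨vv, hvv, rfl⟩
  exact reach_push (hK uu huu vv hvv)


section PushIso
variable (K : Subgraph H.toSignedGraph)

def pushVEquiv : K.toSignedGraph.V ≃ ((H.push K).toSignedGraph).V :=
  Equiv.Set.image Subtype.val K.verts Subtype.val_injective

def pushEEquiv : K.toSignedGraph.E ≃ ((H.push K).toSignedGraph).E :=
  Equiv.Set.image Subtype.val K.edges Subtype.val_injective

lemma push_ends (e : K.toSignedGraph.E) (b : Bool) :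
    ((H.push K).toSignedGraph).ends (pushEEquiv K e) b
      = pushVEquiv K (K.toSignedGraph.ends e b) := Subtype.ext rfl

lemma push_sign (e : K.toSignedGraph.E) :
    ((H.push K).toSignedGraph).sign (pushEEquiv K e) = K.toSignedGraph.sign e := rfl

lemma push_degree (v : K.toSignedGraph.V) :
    ((H.push K).toSignedGraph).degree (pushVEquiv K v) = K.toSignedGraph.degree v :=
  degree_iso (pushVEquiv K) (pushEEquiv K) (push_ends K) v

lemma push_flowAdmissible (hfa : ((H.push K).toSignedGraph).FlowAdmissible) :
    K.toSignedGraph.FlowAdmissible :=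
  flowAdmissible_iso (pushVEquiv K) (pushEEquiv K) (push_ends K) (push_sign K) hfa

end PushIso

lemma mem_push_edgeBoundary {e : H.toSignedGraph.E} :
    e.1 ∈ (H.push K).edgeBoundary ↔ e ∈ K.edgeBoundary := by
  have h1 : (G.ends e.1 true ∈ (H.push K).verts)
      ↔ H.toSignedGraph.ends e true ∈ K.verts :=
    mem_push_verts (x := H.toSignedGraph.ends e true)
  have h2 : (G.ends e.1 false ∈ (H.push K).verts)
      ↔ H.toSignedGraph.ends e false ∈ K.verts :=
    mem_push_verts (x := H.toSignedGraph.ends e false)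
  simp only [Subgraph.edgeBoundary, Set.mem_setOf_eq, Xor']
  rw [h1, h2]

lemma push_edgeBoundary_inter :
    (H.push K).edgeBoundary ∩ H.edges = Subtype.val '' K.edgeBoundary := by
  ext e
  constructor
  · rintro ⟨hb, he⟩
    exact ⟨⟨e, he⟩, mem_push_edgeBoundary.mp hb, rfl⟩
  · rintro ⟨ee, hee, rfl⟩
    exact ⟨mem_push_edgeBoundary.mpr hee, ee.2⟩

lemma mem_push_uchords {e : H.toSignedGraph.E} :
    e.1 ∈ (H.push K).UChords ↔ e ∈ K.UChords := by
  constructor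
  · rintro ⟨⟨hne, hend⟩, C, hs, ⟨i, hei⟩, hall⟩
    have hmem : ∀ j, C.edge j ∈ H.edges := fun j => by
      rcases hall j with hj | hj
      · rw [hj]; exact e.2
      · obtain ⟨ee, _, hee⟩ := hj; exact hee ▸ ee.2
    refine ⟨⟨fun hKe => hne (mem_push_edges.mpr hKe), fun b => mem_push_verts.mp (hend b)⟩,
      H.liftCircuit C hmem, (H.liftCircuit_csign C hmem).trans hs,
      ⟨i, Subtype.ext hei⟩, fun j => ?_⟩
    rcases hall j with hj | hj
    · exact Or.inl (Subtype.ext hj)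
    · exact Or.inr (mem_push_edges.mp hj)
  · rintro ⟨⟨hne, hend⟩, C, hs, ⟨i, hei⟩, hall⟩
    refine ⟨⟨fun hh => hne (mem_push_edges.mp hh), fun b => mem_push_verts.mpr (hend b)⟩,
      H.pushCircuit C, (H.pushCircuit_csign C).trans hs,
      ⟨i, congrArg Subtype.val hei⟩, fun j => ?_⟩
    rcases hall j with hj | hj
    · exact Or.inl (congrArg Subtype.val hj)
    · exact Or.inr (mem_push_edges.mpr hj)

lemma push_uchords_inter :
    (H.push K).UChords ∩ H.edges = Subtype.val '' K.UChords := by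
  ext e
  constructor
  · rintro ⟨hb, he⟩
    exact ⟨⟨e, he⟩, mem_push_uchords.mp hb, rfl⟩
  · rintro ⟨ee, hee, rfl⟩
    exact ⟨mem_push_uchords.mpr hee, ee.2⟩


lemma degree_split (v : H.toSignedGraph.V) :
    G.degree v.1 = H.toSignedGraph.degree v
      + Set.ncard {p : G.E × Bool | p.1 ∉ H.edges ∧ G.ends p.1 p.2 = v.1} := by
  rw [degree_toSignedGraph]
  rw [← Set.ncard_union_eq ?disj (Set.toFinite _) (Set.toFinite _)]
  case disj =>
    rw [Set.disjoint_left]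
    rintro ⟨e, b⟩ ⟨he, -⟩ ⟨hne, -⟩
    exact hne he
  unfold degree
  congr 1
  ext ⟨e, b⟩
  by_cases he : e ∈ H.edges <;> simp [he]

lemma ncard_out_sum :
    ∑ x ∈ (H.push K).verts.toFinite.toFinset,
      Set.ncard {p : G.E × Bool | p.1 ∉ H.edges ∧ G.ends p.1 p.2 = x}
    = Set.ncard {p : G.E × Bool | p.1 ∉ H.edges ∧ G.ends p.1 p.2 ∈ (H.push K).verts} := by
  classical
  rw [Set.ncard_eq_toFinset_card' ]
  have hsplit : ({p : G.E × Bool | p.1 ∉ H.edges ∧ G.ends p.1 p.2 ∈ (H.push K).verts}).toFinset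
      = (H.push K).verts.toFinite.toFinset.biUnion
          (fun x => ({p : G.E × Bool | p.1 ∉ H.edges ∧ G.ends p.1 p.2 = x}).toFinset) := by
    ext ⟨e, b⟩
    simp only [Set.mem_toFinset, Set.Finite.mem_toFinset, Set.mem_setOf_eq, Finset.mem_biUnion]
    constructor
    · rintro ⟨hne, hv⟩
      exact ⟨_, hv, hne, rfl⟩
    · rintro ⟨x, hx, hne, hvx⟩
      exact ⟨hne, hvx ▸ hx⟩
  rw [hsplit, Finset.card_biUnion]
  · exact Finset.sum_congr rfl fun x _ => (Set.ncard_eq_toFinset_card' _)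
  · intro x _ y _ hxy
    simp only [Finset.disjoint_left, Set.mem_toFinset, Set.mem_setOf_eq]
    rintro ⟨e, b⟩ ⟨-, h1⟩ ⟨-, h2⟩
    exact hxy (h1 ▸ h2 ▸ rfl)

lemma sum_deg :
    (∑ x ∈ K.verts.toFinite.toFinset, ((3 : ℤ) - (H.toSignedGraph.degree x : ℤ)))
    = (∑ x ∈ (H.push K).verts.toFinite.toFinset, ((3 : ℤ) - (G.degree x : ℤ)))
      + (Set.ncard {p : G.E × Bool | p.1 ∉ H.edges ∧ G.ends p.1 p.2 ∈ (H.push K).verts} : ℤ) := by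
  classical
  have hinj : ∀ x ∈ K.verts.toFinite.toFinset, ∀ y ∈ K.verts.toFinite.toFinset,
      Subtype.val x = Subtype.val y → x = y := fun x _ y _ h => Subtype.ext h
  have himg : (H.push K).verts.toFinite.toFinset
      = K.verts.toFinite.toFinset.image (fun x : H.toSignedGraph.V => (x.1 : G.V)) := by
    ext x
    simp only [Set.Finite.mem_toFinset, Finset.mem_image]
    constructor
    · rintro ⟨y, hy, rfl⟩
      exact ⟨y, hy, rfl⟩
    · rintro ⟨y, hy, rfl⟩
      exact ⟨y, hy, rfl⟩
  rw [← ncard_out_sum (K := K), himg, Finset.sum_image hinj, Finset.sum_image hinj,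
    Nat.cast_sum, ← Finset.sum_add_distrib]
  refine Finset.sum_congr rfl fun x _ => ?_
  rw [degree_split (v := x)]
  push_cast
  ring

lemma boundary_chord_bound :
    ((H.push K).edgeBoundary \ H.edges).ncard
      + 2 * ((H.push K).UChords \ H.edges).ncard
    ≤ Set.ncard {p : G.E × Bool | p.1 ∉ H.edges ∧ G.ends p.1 p.2 ∈ (H.push K).verts} := by
  classical
  set S := {p : G.E × Bool | p.1 ∉ H.edges ∧ G.ends p.1 p.2 ∈ (H.push K).verts} with hS
  set T1 := (fun e => (e, if G.ends e true ∈ (H.push K).verts then true else false)) ''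
      ((H.push K).edgeBoundary \ H.edges) with hT1
  set T2 := ((H.push K).UChords \ H.edges) ×ˢ (Set.univ : Set Bool) with hT2
  have hT1S : T1 ⊆ S := by
    rintro p ⟨e, ⟨hb, hne⟩, rfl⟩
    refine ⟨hne, ?_⟩
    dsimp only
    by_cases ht : G.ends e true ∈ (H.push K).verts
    · rw [if_pos ht]; exact ht
    · rw [if_neg ht]
      rcases hb with ⟨hx1, hx2⟩ | ⟨hx1, hx2⟩
      · exact absurd hx1 ht
      · exact hx1
  have hT2S : T2 ⊆ S := by
    rintro ⟨e, b⟩ ⟨he, -⟩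
    exact ⟨he.2, he.1.1.2 b⟩
  have hdisj : Disjoint T1 T2 := by
    rw [Set.disjoint_left]
    rintro p hp1 hp2
    obtain ⟨e, ⟨hb, -⟩, rfl⟩ := hp1
    have hu : e ∈ (H.push K).UChords := hp2.1.1
    have hh1 : G.ends e true ∈ (H.push K).verts := hu.1.2 true
    have hh2 : G.ends e false ∈ (H.push K).verts := hu.1.2 false
    rcases hb with ⟨-, hx⟩ | ⟨-, hx⟩
    · exact hx hh2
    · exact hx hh1
  have hcard1 : T1.ncard = ((H.push K).edgeBoundary \ H.edges).ncard :=
    Set.ncard_image_of_injOn (fun x _ y _ hxy => congrArg Prod.fst hxy)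
  have hcard2 : T2.ncard = 2 * ((H.push K).UChords \ H.edges).ncard := by
    rw [hT2, ← Nat.card_coe_set_eq, Nat.card_congr (Equiv.Set.prod _ _), Nat.card_prod,
      Nat.card_coe_set_eq, Nat.card_coe_set_eq, Set.ncard_univ]
    simp [Nat.card_eq_fintype_card, mul_comm]
  calc ((H.push K).edgeBoundary \ H.edges).ncard
        + 2 * ((H.push K).UChords \ H.edges).ncard
      = (T1 ∪ T2).ncard := by
        rw [Set.ncard_union_eq hdisj (Set.toFinite _) (Set.toFinite _), hcard1, hcard2]
    _ ≤ S.ncard := Set.ncard_le_ncard (Set.union_subset hT1S hT2S) (Set.toFinite _)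

lemma push_edgeBoundary_ncard :
    (H.push K).edgeBoundary.ncard
      = K.edgeBoundary.ncard + ((H.push K).edgeBoundary \ H.edges).ncard := by
  have hh := Set.ncard_inter_add_ncard_diff_eq_ncard (H.push K).edgeBoundary H.edges
    (Set.toFinite _)
  rw [push_edgeBoundary_inter] at hh
  have hi : (Subtype.val '' K.edgeBoundary).ncard = K.edgeBoundary.ncard :=
    Set.ncard_image_of_injective (f := fun x : H.toSignedGraph.E => (x.1 : G.E)) _
      Subtype.val_injective
  rw [← hh, hi]

lemma push_uchords_ncard :
    (H.push K).UChords.ncard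
      = K.UChords.ncard + ((H.push K).UChords \ H.edges).ncard := by
  have hh := Set.ncard_inter_add_ncard_diff_eq_ncard (H.push K).UChords H.edges
    (Set.toFinite _)
  rw [push_uchords_inter] at hh
  have hi : (Subtype.val '' K.UChords).ncard = K.UChords.ncard :=
    Set.ncard_image_of_injective (f := fun x : H.toSignedGraph.E => (x.1 : G.E)) _
      Subtype.val_injective
  rw [← hh, hi]

end Subgraph

end SignedGraph

/-- Every subgraph of a shrubbery is a shrubbery. -/
theorem subgraph_of_shrubbery (G : SignedGraph) (h : G.IsShrubbery)
    (H : SignedGraph.Subgraph G) : H.toSignedGraph.IsShrubbery := by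
  obtain ⟨h1, h2, h3, h4⟩ := h
  refine ⟨?_, ?_, ?_, ?_⟩
  · intro v
    exact le_trans (H.degree_toSignedGraph_le v) (h1 v.1)
  · intro K hK
    refine SignedGraph.Subgraph.push_flowAdmissible K (h2 (H.push K) ?_)
    intro v
    have hdeg := SignedGraph.Subgraph.push_degree K ((SignedGraph.Subgraph.pushVEquiv K).symm v)
    rw [Equiv.apply_symm_apply] at hdeg
    rw [hdeg]
    exact hK _
  · intro K hbal hconn hcard
    have hG3 := h3 (H.push K) (SignedGraph.Subgraph.push_balanced hbal)
      (SignedGraph.Subgraph.push_conn hconn)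
      (by rwa [show (H.push K).verts.ncard = K.verts.ncard from
        Set.ncard_image_of_injective _ Subtype.val_injective])
    have hD := SignedGraph.Subgraph.sum_deg (K := K)
    have hBd := SignedGraph.Subgraph.boundary_chord_bound (K := K)
    have hB := SignedGraph.Subgraph.push_edgeBoundary_ncard (K := K)
    have hU := SignedGraph.Subgraph.push_uchords_ncard (K := K)
    have hBd' : (((H.push K).edgeBoundary \ H.edges).ncard : ℤ)
        + 2 * (((H.push K).UChords \ H.edges).ncard : ℤ)
        ≤ (Set.ncard {p : G.E × Bool | p.1 ∉ H.edges
            ∧ G.ends p.1 p.2 ∈ (H.push K).verts} : ℤ) := by exact_mod_cast hBd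
    have hB' : ((H.push K).edgeBoundary.ncard : ℤ)
        = (K.edgeBoundary.ncard : ℤ) + (((H.push K).edgeBoundary \ H.edges).ncard : ℤ) := by
      exact_mod_cast hB
    have hU' : ((H.push K).UChords.ncard : ℤ)
        = (K.UChords.ncard : ℤ) + (((H.push K).UChords \ H.edges).ncard : ℤ) := by
      exact_mod_cast hU
    linarith [hG3, hD, hBd', hB', hU']
  · rintro ⟨C, hn4, hcs⟩
    exact h4 ⟨H.pushCircuit C, hn4, (H.pushCircuit_csign C).trans hcs⟩
end
end

section
/- If a connected signed graph G with no unbalanced theta subgraph and maximum degree at most 3 contains an unbalanced circuit C, then for every vertex x ∉ V(C) there do not exist two internally disjoint paths from x to C. -/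
open scoped Classical

noncomputable section

namespace SignedGraph
variable {G : SignedGraph}

namespace GPath

lemma start_mem {u v : G.V} (P : GPath G u v) : u ∈ P.verts := ⟨0, P.first⟩

lemma end_mem {u v : G.V} (P : GPath G u v) : v ∈ P.verts := ⟨Fin.last _, P.last⟩

lemma ends_mem_verts {u v : G.V} (P : GPath G u v) (i : Fin P.n) (c : Bool) :
    G.ends (P.edge i) c ∈ P.verts := by
  by_cases h : c = P.dir i
  · rw [h, P.edge_src]; exact ⟨_, rfl⟩
  · have h' : c = !(P.dir i) := by revert h; cases c <;> cases P.dir i <;> simp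
    rw [h', P.edge_tgt]; exact ⟨_, rfl⟩

lemma src_ne_tgt {u v : G.V} (P : GPath G u v) (i : Fin P.n) :
    G.ends (P.edge i) (P.dir i) ≠ G.ends (P.edge i) (!(P.dir i)) := by
  rw [P.edge_src, P.edge_tgt]
  intro h
  have h2 := congrArg Fin.val (P.vseq_inj h)
  simp only [Fin.coe_castSucc, Fin.val_succ] at h2
  omega

/-- Reversal of a path. -/
def reverse {u v : G.V} (P : GPath G u v) : GPath G v u where
  n := P.n
  edge i := P.edge i.rev
  dir i := !(P.dir i.rev)
  vseq j := P.vseq j.rev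
  vseq_inj := P.vseq_inj.comp Fin.rev_injective
  first := by
    have h : (0 : Fin (P.n + 1)).rev = Fin.last P.n := by
      ext; simp [Fin.val_rev]
    rw [h]; exact P.last
  last := by
    have h : (Fin.last P.n).rev = 0 := by
      ext; simp [Fin.val_rev]
    rw [h]; exact P.first
  edge_src i := by
    have h : (i.castSucc).rev = i.rev.succ := by
      ext
      simp only [Fin.val_rev, Fin.coe_castSucc, Fin.val_succ]
      have := i.isLt; omega
    rw [h]; exact P.edge_tgt i.rev
  edge_tgt i := by
    have h : (i.succ).rev = (i.rev).castSucc := by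
      ext
      simp only [Fin.val_rev, Fin.coe_castSucc, Fin.val_succ]
      have := i.isLt; omega
    rw [Bool.not_not, h]; exact P.edge_src i.rev

lemma verts_reverse {u v : G.V} (P : GPath G u v) : P.reverse.verts = P.verts :=
  Fin.rev_surjective.range_comp P.vseq

lemma edges_reverse {u v : G.V} (P : GPath G u v) : P.reverse.edges = P.edges :=
  Fin.rev_surjective.range_comp P.edge

lemma psign_reverse {u v : G.V} (P : GPath G u v) : P.reverse.psign = P.psign :=
  Fin.rev_bijective.prod_comp fun i => G.sign (P.edge i)

/-- Concatenation of two paths meeting only at the middle vertex. -/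
def append {u v w : G.V} (P : GPath G u v) (Q : GPath G v w)
    (hPQ : P.verts ∩ Q.verts = {v}) : GPath G u w where
  n := P.n + Q.n
  edge k := if h : k.val < P.n then P.edge ⟨k.val, h⟩
    else Q.edge ⟨k.val - P.n, by have := k.isLt; omega⟩
  dir k := if h : k.val < P.n then P.dir ⟨k.val, h⟩
    else Q.dir ⟨k.val - P.n, by have := k.isLt; omega⟩
  vseq k := if h : k.val ≤ P.n then P.vseq ⟨k.val, by omega⟩
    else Q.vseq ⟨k.val - P.n, by have := k.isLt; omega⟩
  vseq_inj := by
    intro a b hab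
    dsimp only at hab
    have ha := a.isLt; have hb := b.isLt
    by_cases h1 : a.val ≤ P.n <;> by_cases h2 : b.val ≤ P.n
    · rw [dif_pos h1, dif_pos h2] at hab
      have := congrArg Fin.val (P.vseq_inj hab)
      exact Fin.ext this
    · rw [dif_pos h1, dif_neg h2] at hab
      exfalso
      have hz : P.vseq ⟨a.val, by omega⟩ ∈ P.verts ∩ Q.verts := ⟨⟨_, rfl⟩, ⟨_, hab.symm⟩⟩
      rw [hPQ] at hz
      have hz' : P.vseq ⟨a.val, by omega⟩ = v := hz
      have h3 : Q.vseq ⟨b.val - P.n, by omega⟩ = Q.vseq 0 := by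
        rw [Q.first]; exact hab.symm.trans hz'
      have := congrArg Fin.val (Q.vseq_inj h3)
      simp only [Fin.val_zero] at this
      omega
    · rw [dif_neg h1, dif_pos h2] at hab
      exfalso
      have hz : P.vseq ⟨b.val, by omega⟩ ∈ P.verts ∩ Q.verts := ⟨⟨_, rfl⟩, ⟨_, hab⟩⟩
      rw [hPQ] at hz
      have hz' : P.vseq ⟨b.val, by omega⟩ = v := hz
      have h3 : Q.vseq ⟨a.val - P.n, by omega⟩ = Q.vseq 0 := by
        rw [Q.first]; exact hab.trans hz'
      have := congrArg Fin.val (Q.vseq_inj h3)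
      simp only [Fin.val_zero] at this
      omega
    · rw [dif_neg h1, dif_neg h2] at hab
      have := congrArg Fin.val (Q.vseq_inj hab)
      simp only at this
      exact Fin.ext (by omega)
  first := by
    rw [dif_pos (show (0 : Fin (P.n + Q.n + 1)).val ≤ P.n from by
      rw [Fin.val_zero]; exact Nat.zero_le _)]
    have h1 : (⟨(0 : Fin (P.n + Q.n + 1)).val, by have := Nat.zero_le P.n; simp⟩ : Fin (P.n + 1)) = 0 :=
      Fin.ext (by simp)
    rw [h1]; exact P.first
  last := by
    by_cases h : (Fin.last (P.n + Q.n)).val ≤ P.n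
    · rw [dif_pos h]
      have h' : P.n + Q.n ≤ P.n := h
      have hq : Q.n = 0 := by omega
      have h1 : (⟨(Fin.last (P.n + Q.n)).val, by omega⟩ : Fin (P.n + 1)) = Fin.last P.n := by
        apply Fin.ext
        show P.n + Q.n = P.n
        omega
      rw [h1, P.last]
      have h2 : (0 : Fin (Q.n + 1)) = Fin.last Q.n := by
        apply Fin.ext; rw [Fin.val_zero, Fin.val_last]; omega
      rw [← Q.first, h2, Q.last]
    · rw [dif_neg h]
      have h1 : (⟨(Fin.last (P.n + Q.n)).val - P.n, by have := (Fin.last (P.n+Q.n)).isLt; omega⟩ : Fin (Q.n + 1)) = Fin.last Q.n := by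
        apply Fin.ext
        show P.n + Q.n - P.n = Q.n
        omega
      rw [h1]; exact Q.last
  edge_src k := by
    simp only [Fin.coe_castSucc]
    by_cases h : k.val < P.n
    · rw [dif_pos h, dif_pos h, dif_pos (show k.val ≤ P.n by omega)]
      exact P.edge_src ⟨k.val, h⟩
    · rw [dif_neg h, dif_neg h]
      by_cases h2 : k.val = P.n
      · rw [dif_pos (show k.val ≤ P.n by omega)]
        have e1 : (⟨k.val, by have := k.isLt; omega⟩ : Fin (P.n + 1)) = Fin.last P.n :=
          Fin.ext (h2 : k.val = P.n)
        have e2 : (⟨k.val - P.n, by have := k.isLt; omega⟩ : Fin Q.n).castSucc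
            = (0 : Fin (Q.n + 1)) :=
          Fin.ext (show k.val - P.n = (0 : Fin (Q.n + 1)).val from by
            rw [Fin.val_zero]; omega)
        have step : G.ends (Q.edge ⟨k.val - P.n, by have := k.isLt; omega⟩)
            (Q.dir ⟨k.val - P.n, by have := k.isLt; omega⟩) = v :=
          ((Q.edge_src ⟨k.val - P.n, by have := k.isLt; omega⟩).trans
            (congrArg Q.vseq e2)).trans Q.first
        have e1' : P.vseq ⟨k.val, by have := k.isLt; omega⟩ = v :=
          (congrArg P.vseq e1).trans P.last
        exact step.trans e1'.symm
      · rw [dif_neg (show ¬ k.val ≤ P.n by omega)]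
        exact Q.edge_src ⟨k.val - P.n, by have := k.isLt; omega⟩
  edge_tgt k := by
    simp only [Fin.val_succ]
    by_cases h : k.val < P.n
    · rw [dif_pos h, dif_pos h, dif_pos (show k.val + 1 ≤ P.n by omega)]
      have e1 : (⟨k.val + 1, by have := k.isLt; omega⟩ : Fin (P.n + 1))
          = (⟨k.val, h⟩ : Fin P.n).succ := rfl
      rw [e1]; exact P.edge_tgt _
    · rw [dif_neg h, dif_neg h,
        dif_neg (show ¬ k.val + 1 ≤ P.n by omega)]
      have e1 : (⟨k.val + 1 - P.n, by have := k.isLt; omega⟩ : Fin (Q.n + 1))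
          = (⟨k.val - P.n, by have := k.isLt; omega⟩ : Fin Q.n).succ :=
        Fin.ext (show k.val + 1 - P.n = (k.val - P.n) + 1 from by omega)
      rw [e1]; exact Q.edge_tgt _

lemma verts_append {u v w : G.V} (P : GPath G u v) (Q : GPath G v w)
    (hPQ : P.verts ∩ Q.verts = {v}) :
    (P.append Q hPQ).verts = P.verts ∪ Q.verts := by
  ext z
  simp only [verts, append, Set.mem_union, Set.mem_range]
  constructor
  · rintro ⟨k, rfl⟩
    split_ifs with h
    · exact Or.inl ⟨_, rfl⟩
    · exact Or.inr ⟨_, rfl⟩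
  · rintro (⟨i, rfl⟩ | ⟨j, rfl⟩)
    · refine ⟨⟨i.val, by have := i.isLt; omega⟩, ?_⟩
      rw [dif_pos (show i.val ≤ P.n from by have := i.isLt; omega)]
    · by_cases hj : j.val = 0
      · refine ⟨⟨P.n, by omega⟩, ?_⟩
        rw [dif_pos (show P.n ≤ P.n from le_rfl)]
        have e1 : (⟨P.n, by omega⟩ : Fin (P.n + 1)) = Fin.last P.n := rfl
        have e2 : j = 0 := Fin.ext (by rw [Fin.val_zero]; exact hj)
        rw [e1, P.last, e2, Q.first]
      · refine ⟨⟨P.n + j.val, by have := j.isLt; omega⟩, ?_⟩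
        rw [dif_neg (show ¬ P.n + j.val ≤ P.n from by omega)]
        exact congrArg Q.vseq (Fin.ext (show P.n + j.val - P.n = j.val by omega))

lemma edges_append {u v w : G.V} (P : GPath G u v) (Q : GPath G v w)
    (hPQ : P.verts ∩ Q.verts = {v}) :
    (P.append Q hPQ).edges = P.edges ∪ Q.edges := by
  ext e
  simp only [edges, append, Set.mem_union, Set.mem_range]
  constructor
  · rintro ⟨k, rfl⟩
    split_ifs with h
    · exact Or.inl ⟨_, rfl⟩
    · exact Or.inr ⟨_, rfl⟩
  · rintro (⟨i, rfl⟩ | ⟨j, rfl⟩)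
    · exact ⟨⟨i.val, by have := i.isLt; omega⟩, by rw [dif_pos i.isLt]⟩
    · refine ⟨⟨P.n + j.val, by have := j.isLt; omega⟩, ?_⟩
      rw [dif_neg (show ¬ P.n + j.val < P.n from by omega)]
      exact congrArg Q.edge (Fin.ext (show P.n + j.val - P.n = j.val by omega))

lemma psign_unit {u v : G.V} (P : GPath G u v) : P.psign = 1 ∨ P.psign = -1 := by
  refine Finset.prod_induction _ (fun z => z = 1 ∨ z = -1) ?_ (Or.inl rfl) ?_
  · rintro x y (rfl | rfl) (rfl | rfl) <;> norm_num
  · intro i _; exact G.sign_unit _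

end GPath

namespace Circuit

lemma vert_mem_verts (C : Circuit G) (i : ZMod C.n) :
    G.ends (C.edge i) (C.dir i) ∈ C.verts := ⟨i, rfl⟩

lemma ends_mem_verts (C : Circuit G) {e : G.E} (he : e ∈ C.edges) (c : Bool) :
    G.ends e c ∈ C.verts := C.toSubgraph.ends_mem e he c

/-- The arc of a circuit starting at position `a` with `m` edges. -/
def arc (C : Circuit G) (a : ZMod C.n) (m : ℕ) (hm : m < C.n) {u v : G.V}
    (hu : G.ends (C.edge a) (C.dir a) = u)
    (hv : G.ends (C.edge (a + (m : ZMod C.n))) (C.dir (a + (m : ZMod C.n))) = v) :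
    GPath G u v where
  n := m
  edge k := C.edge (a + (k.val : ZMod C.n))
  dir k := C.dir (a + (k.val : ZMod C.n))
  vseq k := G.ends (C.edge (a + (k.val : ZMod C.n))) (C.dir (a + (k.val : ZMod C.n)))
  vseq_inj := by
    haveI : NeZero C.n := ⟨C.hn.ne'⟩
    intro i j hij
    dsimp only at hij
    have h := C.vert_inj hij
    have h2 : ((i.val : ℕ) : ZMod C.n) = ((j.val : ℕ) : ZMod C.n) := by
      have := congrArg (fun z => z - a) h
      simpa [add_sub_cancel_left] using this
    have h3 := congrArg ZMod.val h2
    rw [ZMod.val_natCast_of_lt (by have := i.isLt; omega),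
      ZMod.val_natCast_of_lt (by have := j.isLt; omega)] at h3
    exact Fin.ext h3
  first := by
    have h0 : ((((0 : Fin (m + 1))).val : ℕ) : ZMod C.n) = 0 := by
      rw [Fin.val_zero, Nat.cast_zero]
    rw [h0, add_zero]; exact hu
  last := by
    have h0 : ((((Fin.last m)).val : ℕ) : ZMod C.n) = (m : ZMod C.n) := by
      rw [Fin.val_last]
    rw [h0]; exact hv
  edge_src k := rfl
  edge_tgt k := by
    have h : a + ((k.succ.val : ℕ) : ZMod C.n) = (a + ((k.val : ℕ) : ZMod C.n)) + 1 := by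
      rw [Fin.val_succ]; push_cast; ring
    rw [h]
    exact C.link (a + (k.val : ZMod C.n))

lemma arc_verts_iff (C : Circuit G) (a : ZMod C.n) (m : ℕ) (hm : m < C.n) {u v : G.V}
    (hu : G.ends (C.edge a) (C.dir a) = u)
    (hv : G.ends (C.edge (a + (m : ZMod C.n))) (C.dir (a + (m : ZMod C.n))) = v)
    (w : G.V) :
    w ∈ (C.arc a m hm hu hv).verts ↔ ∃ k, k ≤ m ∧
      G.ends (C.edge (a + (k : ZMod C.n))) (C.dir (a + (k : ZMod C.n))) = w := by
  constructor
  · rintro ⟨j, rfl⟩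
    exact ⟨j.val, Nat.lt_succ_iff.mp j.isLt, rfl⟩
  · rintro ⟨k, hk, rfl⟩
    exact ⟨⟨k, Nat.lt_succ_of_le hk⟩, rfl⟩

lemma arc_verts_subset (C : Circuit G) (a : ZMod C.n) (m : ℕ) (hm : m < C.n) {u v : G.V}
    (hu : G.ends (C.edge a) (C.dir a) = u)
    (hv : G.ends (C.edge (a + (m : ZMod C.n))) (C.dir (a + (m : ZMod C.n))) = v) :
    (C.arc a m hm hu hv).verts ⊆ C.verts := by
  rintro w ⟨j, rfl⟩
  exact ⟨a + (j.val : ZMod C.n), rfl⟩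

lemma arc_edges_iff (C : Circuit G) (a : ZMod C.n) (m : ℕ) (hm : m < C.n) {u v : G.V}
    (hu : G.ends (C.edge a) (C.dir a) = u)
    (hv : G.ends (C.edge (a + (m : ZMod C.n))) (C.dir (a + (m : ZMod C.n))) = v)
    (e : G.E) :
    e ∈ (C.arc a m hm hu hv).edges ↔ ∃ k, k < m ∧ C.edge (a + (k : ZMod C.n)) = e := by
  constructor
  · rintro ⟨j, rfl⟩
    exact ⟨j.val, j.isLt, rfl⟩
  · rintro ⟨k, hk, rfl⟩
    exact ⟨⟨k, hk⟩, rfl⟩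

lemma arc_edges_subset (C : Circuit G) (a : ZMod C.n) (m : ℕ) (hm : m < C.n) {u v : G.V}
    (hu : G.ends (C.edge a) (C.dir a) = u)
    (hv : G.ends (C.edge (a + (m : ZMod C.n))) (C.dir (a + (m : ZMod C.n))) = v) :
    (C.arc a m hm hu hv).edges ⊆ C.edges := by
  rintro e ⟨j, rfl⟩
  exact ⟨a + (j.val : ZMod C.n), rfl⟩

lemma arc_psign (C : Circuit G) (a : ZMod C.n) (m : ℕ) (hm : m < C.n) {u v : G.V}
    (hu : G.ends (C.edge a) (C.dir a) = u)
    (hv : G.ends (C.edge (a + (m : ZMod C.n))) (C.dir (a + (m : ZMod C.n))) = v) :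
    (C.arc a m hm hu hv).psign
      = ∏ k ∈ Finset.range m, G.sign (C.edge (a + (k : ZMod C.n))) :=
  Fin.prod_univ_eq_prod_range (fun k => G.sign (C.edge (a + (k : ZMod C.n)))) m

lemma prod_shift (C : Circuit G) (a : ZMod C.n) :
    ∏ k ∈ Finset.range C.n, G.sign (C.edge (a + (k : ZMod C.n))) = C.csign := by
  haveI : NeZero C.n := ⟨C.hn.ne'⟩
  rw [csign]
  refine Finset.prod_nbij' (fun k => a + (k : ZMod C.n)) (fun i => (i - a).val)
    (fun k _ => Finset.mem_univ _) (fun i _ => Finset.mem_range.mpr (ZMod.val_lt _))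
    ?_ ?_ ?_
  · intro k hk
    show (a + (k : ZMod C.n) - a).val = k
    rw [add_sub_cancel_left, ZMod.val_natCast_of_lt (Finset.mem_range.mp hk)]
  · intro i _
    show a + (((i - a).val : ℕ) : ZMod C.n) = i
    rw [ZMod.natCast_rightInverse (i - a), add_sub_cancel]
  · intro k _; rfl

end Circuit

/-- Edges of a path internally disjoint from a circuit are disjoint from the
circuit's edges. -/
lemma path_circuit_edges_disjoint {u v : G.V} (P : GPath G u v) (C : Circuit G)
    {y : G.V} (h : P.verts ∩ C.verts = {y}) : Disjoint P.edges C.edges := by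
  rw [Set.disjoint_left]
  rintro e ⟨i, rfl⟩ heC
  have h1 : G.ends (P.edge i) (P.dir i) ∈ P.verts ∩ C.verts :=
    ⟨P.ends_mem_verts i _, C.ends_mem_verts heC _⟩
  have h2 : G.ends (P.edge i) (!(P.dir i)) ∈ P.verts ∩ C.verts :=
    ⟨P.ends_mem_verts i _, C.ends_mem_verts heC _⟩
  rw [h] at h1 h2
  exact P.src_ne_tgt i (h1.trans h2.symm)

end SignedGraph


/-- In a connected signed graph with no unbalanced theta and
maximum degree at most 3, no vertex outside an unbalanced circuit `C` is joined
to `C` by two internally disjoint paths. -/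
theorem no_two_disjoint_paths_to_unbalanced_circuit (G : SignedGraph)
    (hconn : G.Connected) (hnt : ¬ G.HasUnbalancedTheta)
    (hΔ : ∀ v, G.degree v ≤ 3)
    (C : SignedGraph.Circuit G) (hC : C.csign = -1)
    (x : G.V) (hx : x ∉ C.verts) :
    ¬ ∃ (y₁ y₂ : G.V) (_ : y₁ ∈ C.verts) (_ : y₂ ∈ C.verts)
        (P₁ : SignedGraph.GPath G x y₁) (P₂ : SignedGraph.GPath G x y₂),
      1 ≤ P₁.n ∧ 1 ≤ P₂.n ∧
      P₁.verts ∩ C.verts = {y₁} ∧ P₂.verts ∩ C.verts = {y₂} ∧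
      P₁.verts ∩ P₂.verts = {x} := by
  rintro ⟨y₁, y₂, hy₁, hy₂, P₁, P₂, hn₁, hn₂, hP₁C, hP₂C, hP₁P₂⟩
  haveI : NeZero C.n := ⟨C.hn.ne'⟩
  have hn := C.hn
  obtain ⟨a, ha⟩ := hy₁
  obtain ⟨b, hb⟩ := hy₂
  dsimp only at ha hb
  subst ha; subst hb
  -- the two attachment vertices are distinct
  have hne : G.ends (C.edge a) (C.dir a) ≠ G.ends (C.edge b) (C.dir b) := by
    intro h
    have hmem : G.ends (C.edge a) (C.dir a) ∈ P₁.verts ∩ P₂.verts :=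
      ⟨P₁.end_mem, by rw [h]; exact P₂.end_mem⟩
    rw [hP₁P₂] at hmem
    have hmem' : G.ends (C.edge a) (C.dir a) = x := hmem
    exact hx (hmem' ▸ (⟨a, rfl⟩ : G.ends (C.edge a) (C.dir a) ∈ C.verts))
  have hab : a ≠ b := fun h => hne (by rw [h])
  set m := (b - a).val with hmdef
  have hm0 : 0 < m := ZMod.val_pos.mpr (sub_ne_zero.mpr (Ne.symm hab))
  have hmn : m < C.n := ZMod.val_lt _
  have hmn2 : C.n - m < C.n := by omega
  have key : a + (m : ZMod C.n) = b := by
    rw [hmdef, ZMod.natCast_rightInverse (b - a)]; ring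
  have key2 : b + ((C.n - m : ℕ) : ZMod C.n) = a := by
    have h1 : ((C.n - m : ℕ) : ZMod C.n) = -(m : ZMod C.n) := by
      have h2 : ((C.n : ℕ) : ZMod C.n) = 0 := ZMod.natCast_self _
      rw [Nat.cast_sub hmn.le, h2]; ring
    rw [h1, ← key]; ring
  have hvb : G.ends (C.edge (a + (m : ZMod C.n))) (C.dir (a + (m : ZMod C.n)))
      = G.ends (C.edge b) (C.dir b) := by rw [key]
  have hva : G.ends (C.edge (b + ((C.n - m : ℕ) : ZMod C.n)))
        (C.dir (b + ((C.n - m : ℕ) : ZMod C.n)))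
      = G.ends (C.edge a) (C.dir a) := by rw [key2]
  set A := C.arc a m hmn rfl hvb with hA
  set B := C.arc b (C.n - m) hmn2 rfl hva with hB
  have hrev : P₁.reverse.verts ∩ P₂.verts = {x} := by
    rw [SignedGraph.GPath.verts_reverse]; exact hP₁P₂
  set Q := P₁.reverse.append P₂ hrev with hQ
  have hQv : Q.verts = P₁.verts ∪ P₂.verts := by
    rw [hQ, SignedGraph.GPath.verts_append, SignedGraph.GPath.verts_reverse]
  have hQe : Q.edges = P₁.edges ∪ P₂.edges := by
    rw [hQ, SignedGraph.GPath.edges_append, SignedGraph.GPath.edges_reverse]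
  -- vertex intersections
  have hQC : ∀ w, w ∈ Q.verts → w ∈ C.verts →
      w = G.ends (C.edge a) (C.dir a) ∨ w = G.ends (C.edge b) (C.dir b) := by
    intro w hwQ hwC
    rw [hQv] at hwQ
    rcases hwQ with h | h
    · exact Or.inl (show w ∈ ({G.ends (C.edge a) (C.dir a)} : Set G.V) from
        hP₁C ▸ ⟨h, hwC⟩)
    · exact Or.inr (show w ∈ ({G.ends (C.edge b) (C.dir b)} : Set G.V) from
        hP₂C ▸ ⟨h, hwC⟩)
  have hQA : Q.verts ∩ A.verts
      = {G.ends (C.edge a) (C.dir a), G.ends (C.edge b) (C.dir b)} := by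
    apply Set.Subset.antisymm
    · rintro w ⟨hwQ, hwA⟩
      simp only [Set.mem_insert_iff, Set.mem_singleton_iff]
      exact hQC w hwQ (C.arc_verts_subset a m hmn rfl hvb hwA)
    · intro w hw
      simp only [Set.mem_insert_iff, Set.mem_singleton_iff] at hw
      rcases hw with rfl | rfl
      · exact ⟨Q.start_mem, A.start_mem⟩
      · exact ⟨Q.end_mem, A.end_mem⟩
  have hQB : Q.verts ∩ B.verts
      = {G.ends (C.edge a) (C.dir a), G.ends (C.edge b) (C.dir b)} := by
    apply Set.Subset.antisymm
    · rintro w ⟨hwQ, hwB⟩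
      simp only [Set.mem_insert_iff, Set.mem_singleton_iff]
      exact hQC w hwQ (C.arc_verts_subset b (C.n - m) hmn2 rfl hva hwB)
    · intro w hw
      simp only [Set.mem_insert_iff, Set.mem_singleton_iff] at hw
      rcases hw with rfl | rfl
      · exact ⟨Q.start_mem, B.end_mem⟩
      · exact ⟨Q.end_mem, B.start_mem⟩
  have hABv : A.verts ∩ B.verts
      = {G.ends (C.edge a) (C.dir a), G.ends (C.edge b) (C.dir b)} := by
    apply Set.Subset.antisymm
    · rintro w ⟨hwA, hwB⟩
      simp only [Set.mem_insert_iff, Set.mem_singleton_iff]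
      obtain ⟨k₁, hk₁, e₁⟩ := (C.arc_verts_iff a m hmn rfl hvb w).mp hwA
      obtain ⟨k₂, hk₂, e₂⟩ := (C.arc_verts_iff b (C.n - m) hmn2 rfl hva w).mp hwB
      have hv := C.vert_inj (e₁.trans e₂.symm)
      have hcast : ((k₁ : ℕ) : ZMod C.n) = ((m + k₂ : ℕ) : ZMod C.n) := by
        refine add_left_cancel (a := a) ?_
        rw [hv, ← key]; push_cast; ring
      have hmod := (ZMod.natCast_eq_natCast_iff _ _ _).mp hcast
      rw [Nat.ModEq] at hmod
      rw [Nat.mod_eq_of_lt (by omega)] at hmod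
      rcases lt_or_eq_of_le (show m + k₂ ≤ C.n by omega) with hlt | heq
      · rw [Nat.mod_eq_of_lt hlt] at hmod
        have hk1 : k₁ = m := by omega
        subst hk1
        right
        rw [← e₁, key]
      · have h0 : (m + k₂) % C.n = 0 := by rw [heq, Nat.mod_self]
        have hk1 : k₁ = 0 := by omega
        subst hk1
        left
        rw [← e₁]
        norm_num
    · intro w hw
      simp only [Set.mem_insert_iff, Set.mem_singleton_iff] at hw
      rcases hw with rfl | rfl
      · exact ⟨A.start_mem, B.end_mem⟩
      · exact ⟨A.end_mem, B.start_mem⟩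
  -- edge disjointness
  have hP₁dis := SignedGraph.path_circuit_edges_disjoint P₁ C hP₁C
  have hP₂dis := SignedGraph.path_circuit_edges_disjoint P₂ C hP₂C
  have hQAe : Disjoint Q.edges A.edges := by
    rw [Set.disjoint_left, hQe]
    rintro e (h | h) heA
    · exact Set.disjoint_left.mp hP₁dis h (C.arc_edges_subset a m hmn rfl hvb heA)
    · exact Set.disjoint_left.mp hP₂dis h (C.arc_edges_subset a m hmn rfl hvb heA)
  have hQBe : Disjoint Q.edges B.edges := by
    rw [Set.disjoint_left, hQe]
    rintro e (h | h) heB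
    · exact Set.disjoint_left.mp hP₁dis h
        (C.arc_edges_subset b (C.n - m) hmn2 rfl hva heB)
    · exact Set.disjoint_left.mp hP₂dis h
        (C.arc_edges_subset b (C.n - m) hmn2 rfl hva heB)
  have hABe : Disjoint A.edges B.edges := by
    rw [Set.disjoint_left]
    intro e heA heB
    obtain ⟨k₁, hk₁, e₁⟩ := (C.arc_edges_iff a m hmn rfl hvb e).mp heA
    obtain ⟨k₂, hk₂, e₂⟩ := (C.arc_edges_iff b (C.n - m) hmn2 rfl hva e).mp heB
    have hv := C.edge_inj (e₁.trans e₂.symm)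
    have hcast : ((k₁ : ℕ) : ZMod C.n) = ((m + k₂ : ℕ) : ZMod C.n) := by
      refine add_left_cancel (a := a) ?_
      rw [hv, ← key]; push_cast; ring
    have hmod := (ZMod.natCast_eq_natCast_iff _ _ _).mp hcast
    rw [Nat.ModEq, Nat.mod_eq_of_lt (by omega), Nat.mod_eq_of_lt (by omega)] at hmod
    omega
  -- signs
  have hprod : A.psign * B.psign = -1 := by
    rw [hA, hB, C.arc_psign, C.arc_psign]
    have hcong : ∀ k ∈ Finset.range (C.n - m),
        G.sign (C.edge (b + (k : ZMod C.n)))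
          = G.sign (C.edge (a + ((m + k : ℕ) : ZMod C.n))) := by
      intro k _
      congr 2
      rw [← key]; push_cast; ring
    rw [Finset.prod_congr rfl hcong,
      ← Finset.prod_range_add (fun k => G.sign (C.edge (a + (k : ZMod C.n)))) m (C.n - m),
      show m + (C.n - m) = C.n by omega, C.prod_shift a, hC]
  have hAneB : A.psign ≠ B.psign := by
    intro h
    rcases A.psign_unit with h1 | h1 <;> rw [h1] at h hprod <;>
      rw [← h] at hprod <;> norm_num at hprod
  have hQB' : Q.verts ∩ B.reverse.verts
      = {G.ends (C.edge a) (C.dir a), G.ends (C.edge b) (C.dir b)} := by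
    rw [SignedGraph.GPath.verts_reverse]; exact hQB
  have hABv' : A.verts ∩ B.reverse.verts
      = {G.ends (C.edge a) (C.dir a), G.ends (C.edge b) (C.dir b)} := by
    rw [SignedGraph.GPath.verts_reverse]; exact hABv
  have hQBe' : Disjoint Q.edges B.reverse.edges := by
    rw [SignedGraph.GPath.edges_reverse]; exact hQBe
  have hABe' : Disjoint A.edges B.reverse.edges := by
    rw [SignedGraph.GPath.edges_reverse]; exact hABe
  have hAneB' : A.psign ≠ B.reverse.psign := by
    rw [SignedGraph.GPath.psign_reverse]; exact hAneB
  exact hnt ⟨_, _, hne, Q, A, B.reverse, ⟨hQA, hQAe⟩, ⟨hQB', hQBe'⟩, ⟨hABv', hABe'⟩,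
    fun hcon => hAneB' hcon.2⟩
end
end

section
/- A connected signed graph G is flow-admissible if and only if its negativeness ε(G) ≠ 1 and there is no cut-edge b such that G − b has a balanced component. -/
open scoped Classical

noncomputable section

namespace SignedGraph
variable {G : SignedGraph}

inductive GWalk (G : SignedGraph) : G.V → G.V → Type
  | nil (v : G.V) : GWalk G v v
  | cons {u w : G.V} (e : G.E) (b : Bool) (h : G.ends e b = u)
      (rest : GWalk G (G.ends e (!b)) w) : GWalk G u w

namespace GWalk

def wsign (σ : G.E → ℤ) : ∀ {u v : G.V}, GWalk G u v → ℤ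
  | _, _, .nil _ => 1
  | _, _, .cons e _ _ rest => σ e * rest.wsign σ

def In (S : Set G.E) : ∀ {u v : G.V}, GWalk G u v → Prop
  | _, _, .nil _ => True
  | _, _, .cons e _ _ rest => e ∈ S ∧ rest.In S

def cnt (e₀ : G.E) : ∀ {u v : G.V}, GWalk G u v → ℕ
  | _, _, .nil _ => 0
  | _, _, .cons e _ _ rest => (if e = e₀ then 1 else 0) + rest.cnt e₀

def append : ∀ {u v w : G.V}, GWalk G u v → GWalk G v w → GWalk G u w
  | _, _, _, .nil _, W => W
  | _, _, _, .cons e b h rest, W => .cons e b h (rest.append W)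

def single (e : G.E) (b : Bool) {u v : G.V} (h1 : G.ends e b = u)
    (h2 : G.ends e (!b) = v) : GWalk G u v :=
  .cons e b h1 (h2 ▸ GWalk.nil v)

def reverse : ∀ {u v : G.V}, GWalk G u v → GWalk G v u
  | _, _, .nil v => .nil v
  | _, _, .cons e b h rest => rest.reverse.append (single e (!b) rfl (by rw [Bool.not_not]; exact h))

@[simp] lemma wsign_nil (σ : G.E → ℤ) (v : G.V) : (GWalk.nil (G := G) v).wsign σ = 1 := rfl
@[simp] lemma wsign_cons (σ : G.E → ℤ) {u w : G.V} (e : G.E) (b : Bool) (h : G.ends e b = u)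
    (rest : GWalk G (G.ends e (!b)) w) : (GWalk.cons e b h rest).wsign σ = σ e * rest.wsign σ := rfl
@[simp] lemma In_nil (S : Set G.E) (v : G.V) : (GWalk.nil (G := G) v).In S := trivial
@[simp] lemma In_cons (S : Set G.E) {u w : G.V} (e : G.E) (b : Bool) (h : G.ends e b = u)
    (rest : GWalk G (G.ends e (!b)) w) : (GWalk.cons e b h rest).In S ↔ e ∈ S ∧ rest.In S := Iff.rfl
@[simp] lemma cnt_nil (e₀ : G.E) (v : G.V) : (GWalk.nil (G := G) v).cnt e₀ = 0 := rfl
@[simp] lemma cnt_cons (e₀ : G.E) {u w : G.V} (e : G.E) (b : Bool) (h : G.ends e b = u)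
    (rest : GWalk G (G.ends e (!b)) w) :
    (GWalk.cons e b h rest).cnt e₀ = (if e = e₀ then 1 else 0) + rest.cnt e₀ := rfl
@[simp] lemma nil_append {u v : G.V} (W : GWalk G u v) : (GWalk.nil u).append W = W := rfl
@[simp] lemma cons_append {u w x : G.V} (e : G.E) (b : Bool) (h : G.ends e b = u)
    (rest : GWalk G (G.ends e (!b)) w) (W : GWalk G w x) :
    (GWalk.cons e b h rest).append W = GWalk.cons e b h (rest.append W) := rfl

@[simp] lemma wsign_single (σ : G.E → ℤ) (e : G.E) (b : Bool) {u v : G.V} (h1 : G.ends e b = u)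
    (h2 : G.ends e (!b) = v) : (single e b h1 h2).wsign σ = σ e := by
  subst h2; simp [single, wsign]
@[simp] lemma In_single (S : Set G.E) (e : G.E) (b : Bool) {u v : G.V} (h1 : G.ends e b = u)
    (h2 : G.ends e (!b) = v) : (single e b h1 h2).In S ↔ e ∈ S := by
  subst h2; simp [single, In]
@[simp] lemma cnt_single (e₀ e : G.E) (b : Bool) {u v : G.V} (h1 : G.ends e b = u)
    (h2 : G.ends e (!b) = v) : (single e b h1 h2).cnt e₀ = if e = e₀ then 1 else 0 := by
  subst h2; simp [single, cnt]

lemma wsign_append (σ : G.E → ℤ) : ∀ {u v w : G.V} (W₁ : GWalk G u v) (W₂ : GWalk G v w),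
    (W₁.append W₂).wsign σ = W₁.wsign σ * W₂.wsign σ
  | _, _, _, .nil _, W₂ => by simp
  | _, _, _, .cons e b h rest, W₂ => by simp [wsign_append σ rest W₂, mul_assoc]

lemma In_append (S : Set G.E) : ∀ {u v w : G.V} (W₁ : GWalk G u v) (W₂ : GWalk G v w),
    (W₁.append W₂).In S ↔ W₁.In S ∧ W₂.In S
  | _, _, _, .nil _, W₂ => by simp
  | _, _, _, .cons e b h rest, W₂ => by simp [In_append S rest W₂]; tauto

lemma cnt_append (e₀ : G.E) : ∀ {u v w : G.V} (W₁ : GWalk G u v) (W₂ : GWalk G v w),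
    (W₁.append W₂).cnt e₀ = W₁.cnt e₀ + W₂.cnt e₀
  | _, _, _, .nil _, W₂ => by simp
  | _, _, _, .cons e b h rest, W₂ => by simp [cnt_append e₀ rest W₂]; omega

lemma wsign_reverse (σ : G.E → ℤ) : ∀ {u v : G.V} (W : GWalk G u v),
    W.reverse.wsign σ = W.wsign σ
  | _, _, .nil _ => rfl
  | _, _, .cons e b h rest => by
      simp [reverse, wsign_append, wsign_reverse σ rest, mul_comm]

lemma In_reverse (S : Set G.E) : ∀ {u v : G.V} (W : GWalk G u v),
    W.reverse.In S ↔ W.In S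
  | _, _, .nil _ => Iff.rfl
  | _, _, .cons e b h rest => by
      simp [reverse, In_append, In_reverse S rest]; tauto

lemma cnt_reverse (e₀ : G.E) : ∀ {u v : G.V} (W : GWalk G u v),
    W.reverse.cnt e₀ = W.cnt e₀
  | _, _, .nil _ => rfl
  | _, _, .cons e b h rest => by
      simp [reverse, cnt_append, cnt_reverse e₀ rest]; omega

lemma wsign_unit {σ : G.E → ℤ} (hσ : ∀ e, σ e = 1 ∨ σ e = -1) :
    ∀ {u v : G.V} (W : GWalk G u v), W.wsign σ = 1 ∨ W.wsign σ = -1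
  | _, _, .nil _ => Or.inl rfl
  | _, _, .cons e b h rest => by
      rcases hσ e with h1 | h1 <;> rcases wsign_unit hσ rest with h2 | h2 <;>
        simp [h1, h2]

lemma cnt_eq_zero {S : Set G.E} {e₀ : G.E} (he : e₀ ∉ S) :
    ∀ {u v : G.V} (W : GWalk G u v), W.In S → W.cnt e₀ = 0
  | _, _, .nil _, _ => rfl
  | _, _, .cons e b h rest, hin => by
      have : e ≠ e₀ := fun h' => he (h' ▸ hin.1)
      simp [this, cnt_eq_zero he rest hin.2]

lemma In_mono {S T : Set G.E} (hST : S ⊆ T) : ∀ {u v : G.V} (W : GWalk G u v),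
    W.In S → W.In T
  | _, _, .nil _, _ => trivial
  | _, _, .cons e b h rest, hin => ⟨hST hin.1, In_mono hST rest hin.2⟩

end GWalk

lemma reach_of_walk {S : Set G.E} : ∀ {u v : G.V} (W : GWalk G u v), W.In S → G.Reach S u v
  | _, _, .nil v, _ => Relation.EqvGen.refl v
  | u, v, .cons e b h rest, hin =>
      Relation.EqvGen.trans _ _ _
        (Relation.EqvGen.rel _ _ ⟨e, hin.1, b, h, rfl⟩)
        (reach_of_walk rest hin.2)

lemma walk_of_reach {S : Set G.E} {u v : G.V} (h : G.Reach S u v) :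
    Nonempty {W : GWalk G u v // W.In S} := by
  induction h with
  | rel x y hxy =>
      obtain ⟨e, heS, b, h1, h2⟩ := hxy
      exact ⟨GWalk.single e b h1 h2, by simp [heS]⟩
  | refl x => exact ⟨.nil x, trivial⟩
  | symm x y _ ih =>
      obtain ⟨W, hW⟩ := ih
      exact ⟨W.reverse, (GWalk.In_reverse S W).2 hW⟩
  | trans x y z _ _ ih1 ih2 =>
      obtain ⟨W₁, h1⟩ := ih1
      obtain ⟨W₂, h2⟩ := ih2
      exact ⟨W₁.append W₂, (GWalk.In_append S W₁ W₂).2 ⟨h1, h2⟩⟩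


/-- switch of an arbitrary sign function -/
def pswitch (σ : G.E → ℤ) (U : Set G.V) (e : G.E) : ℤ :=
  if Xor' (G.ends e true ∈ U) (G.ends e false ∈ U) then -σ e else σ e

/-- `±1` vertex weights of a switching set -/
def sgn (U : Set G.V) (v : G.V) : ℤ := if v ∈ U then -1 else 1

lemma sgn_unit (U : Set G.V) (v : G.V) : sgn U v = 1 ∨ sgn U v = -1 := by
  unfold sgn; split <;> simp

lemma sgn_sq (U : Set G.V) (v : G.V) : sgn U v * sgn U v = 1 := by
  rcases sgn_unit U v with h | h <;> simp [h]

lemma switchSign_eq_pswitch (U : Set G.V) (e : G.E) :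
    G.switchSign U e = pswitch G.sign U e := rfl

lemma pswitch_eq_sgn (σ : G.E → ℤ) (U : Set G.V) (e : G.E) :
    pswitch σ U e = σ e * sgn U (G.ends e true) * sgn U (G.ends e false) := by
  unfold pswitch sgn Xor'
  by_cases h1 : G.ends e true ∈ U <;> by_cases h2 : G.ends e false ∈ U <;>
    simp [h1, h2] <;> ring


lemma wsign_pswitch (σ : G.E → ℤ) (U : Set G.V) : ∀ {u v : G.V} (W : GWalk G u v),
    W.wsign (pswitch σ U) = W.wsign σ * sgn U u * sgn U v
  | _, _, .nil v => by simp [GWalk.wsign, sgn_sq, mul_assoc]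
  | _, w, .cons e b h rest => by
      subst h
      show pswitch σ U e * GWalk.wsign (pswitch σ U) rest = _
      rw [wsign_pswitch σ U rest, pswitch_eq_sgn]
      show _ = σ e * GWalk.wsign σ rest * sgn U (G.ends e b) * sgn U w
      cases b
      · simp only [Bool.not_false]
        linear_combination σ e * sgn U (G.ends e false) * GWalk.wsign σ rest * sgn U w *
          sgn_sq U (G.ends e true)
      · simp only [Bool.not_true]
        linear_combination σ e * sgn U (G.ends e true) * GWalk.wsign σ rest * sgn U w *
          sgn_sq U (G.ends e false)

lemma wsign_congr {σ σ' : G.E → ℤ} (hσ : ∀ e, σ e = σ' e) :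
    ∀ {u v : G.V} (W : GWalk G u v), W.wsign σ = W.wsign σ'
  | _, _, .nil _ => rfl
  | _, _, .cons e _ _ rest => by
      show σ e * _ = σ' e * _
      rw [hσ e, wsign_congr hσ rest]

lemma wsign_one : ∀ {u v : G.V} (W : GWalk G u v), W.wsign (fun _ => (1:ℤ)) = 1
  | _, _, .nil _ => rfl
  | _, _, .cons e _ _ rest => by
      show 1 * _ = 1
      rw [wsign_one rest, mul_one]


lemma wsign_closed_pswitch (σ : G.E → ℤ) (U : Set G.V) {v : G.V} (W : GWalk G v v) :
    W.wsign (pswitch σ U) = W.wsign σ := by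
  rw [wsign_pswitch]
  rcases sgn_unit U v with h | h <;> simp [h, mul_assoc]

lemma pswitch_unit {σ : G.E → ℤ} (hσ : ∀ e, σ e = 1 ∨ σ e = -1) (U : Set G.V) (e : G.E) :
    pswitch σ U e = 1 ∨ pswitch σ U e = -1 := by
  unfold pswitch; rcases hσ e with h | h <;> split <;> simp [h]

lemma negativeness_le (U : Set G.V) :
    G.negativeness ≤ {e | G.switchSign U e = -1}.ncard :=
  Nat.sInf_le ⟨U, rfl⟩

lemma switchSign_unit (U : Set G.V) (e : G.E) :
    G.switchSign U e = 1 ∨ G.switchSign U e = -1 :=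
  pswitch_unit G.sign_unit U e

/-- balanced gives an all-positive switching -/
lemma balanced_spec (h : G.negativeness = 0) :
    ∃ U : Set G.V, ∀ e, G.switchSign U e = 1 := by
  have hne : {n | ∃ U : Set G.V, n = {e | G.switchSign U e = -1}.ncard}.Nonempty :=
    ⟨_, ⟨∅, rfl⟩⟩
  have h0 : 0 ∈ {n | ∃ U : Set G.V, n = {e | G.switchSign U e = -1}.ncard} := by
    rcases (Nat.sInf_eq_zero.1 h) with h' | h'
    · exact h'
    · exact absurd h' hne.ne_empty
  obtain ⟨U, hU⟩ := h0
  refine ⟨U, fun e => ?_⟩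
  have hempty : {e | G.switchSign U e = -1} = ∅ :=
    Set.ncard_eq_zero (Set.toFinite _) |>.1 hU.symm
  have : e ∉ {e | G.switchSign U e = -1} := by rw [hempty]; exact Set.notMem_empty e
  rcases switchSign_unit (G := G) U e with h' | h'
  · exact h'
  · exact absurd h' this

/-- in a balanced graph all closed walks are positive -/
lemma closed_walk_pos_of_balanced (h : G.negativeness = 0) {v : G.V}
    (W : GWalk G v v) : W.wsign G.sign = 1 := by
  obtain ⟨U, hU⟩ := balanced_spec (G := G) h
  have h1 : W.wsign (pswitch G.sign U) = W.wsign G.sign := wsign_closed_pswitch _ _ _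
  have h2 : W.wsign (pswitch G.sign U) = 1 := by
    have hps : ∀ e, pswitch G.sign U e = (fun _ => (1:ℤ)) e := fun e =>
      (switchSign_eq_pswitch U e).symm.trans (hU e)
    rw [wsign_congr hps W, wsign_one W]
  rw [← h1, h2]

/-- Harary-type lemma -/
lemma harary {σ : G.E → ℤ} (hσ : ∀ e, σ e = 1 ∨ σ e = -1) (S : Set G.E) (r : G.V)
    (hcl : ∀ (v : G.V) (W : GWalk G v v), W.In S → W.wsign σ = 1) :
    ∃ U : Set G.V, ∀ e ∈ S, G.Reach S r (G.ends e true) → pswitch σ U e = 1 := by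
  have uniq : ∀ {v : G.V} (W₁ W₂ : GWalk G r v), W₁.In S → W₂.In S →
      W₁.wsign σ = W₂.wsign σ := by
    intro v W₁ W₂ h1 h2
    have hY : (W₁.append W₂.reverse).wsign σ = 1 :=
      hcl r _ ((GWalk.In_append S _ _).2 ⟨h1, (GWalk.In_reverse S W₂).2 h2⟩)
    rw [GWalk.wsign_append, GWalk.wsign_reverse] at hY
    rcases GWalk.wsign_unit hσ W₁ with k1 | k1 <;> rcases GWalk.wsign_unit hσ W₂ with k2 | k2 <;>
      rw [k1, k2] at hY ⊢ <;> norm_num at hY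
  refine ⟨{v | Nonempty {W : GWalk G r v // W.In S ∧ W.wsign σ = -1}}, fun e heS hR => ?_⟩
  obtain ⟨W, hW⟩ := walk_of_reach hR
  set U : Set G.V := {v | Nonempty {W : GWalk G r v // W.In S ∧ W.wsign σ = -1}} with hUdef
  have memt : G.ends e true ∈ U ↔ W.wsign σ = -1 := by
    constructor
    · rintro ⟨W₁, hin, hs⟩; rw [uniq W W₁ hW hin]; exact hs
    · intro hs; exact ⟨W, hW, hs⟩
  set W' := W.append (GWalk.single e true rfl rfl) with hW'def
  have hW'in : W'.In S := (GWalk.In_append S _ _).2 ⟨hW, (GWalk.In_single ..).2 heS⟩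
  have hW'sign : W'.wsign σ = W.wsign σ * σ e := by
    rw [hW'def, GWalk.wsign_append, GWalk.wsign_single]
  have memf : G.ends e false ∈ U ↔ W.wsign σ * σ e = -1 := by
    constructor
    · rintro ⟨W₁, hin, hs⟩
      rw [← hW'sign]
      rw [uniq W' W₁ hW'in hin]; exact hs
    · intro hs; exact ⟨W', hW'in, hW'sign.trans hs⟩
  unfold pswitch
  rcases hσ e with he | he <;> rcases GWalk.wsign_unit hσ W with hw | hw
  · have : ¬ Xor' (G.ends e true ∈ U) (G.ends e false ∈ U) := by
      rw [Xor', memt, memf, he, hw]; norm_num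
    simp [this, he]
  · have : ¬ Xor' (G.ends e true ∈ U) (G.ends e false ∈ U) := by
      rw [Xor', memt, memf, he, hw]; norm_num
    simp [this, he]
  · have : Xor' (G.ends e true ∈ U) (G.ends e false ∈ U) := by
      rw [Xor', memt, memf, he, hw]; norm_num
    simp [this, he]
  · have : Xor' (G.ends e true ∈ U) (G.ends e false ∈ U) := by
      rw [Xor', memt, memf, he, hw]; norm_num
    simp [this, he]


def wflow (τ : G.E → Bool → ℤ) : ∀ {u v : G.V}, GWalk G u v → ℤ → G.E → ℤ
  | _, _, .nil _, _, _ => 0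
  | _, _, .cons e b _ rest, a, e' =>
      (if e' = e then -a * τ e b else 0) + wflow τ rest (a * G.sign e) e'

lemma boundary_zero (τ : G.E → Bool → ℤ) (x : G.V) :
    G.boundary τ (fun _ => (0:ℤ)) x = 0 := by
  simp [boundary]

lemma boundary_add (τ : G.E → Bool → ℤ) (f g : G.E → ℤ) (x : G.V) :
    G.boundary τ (fun e => f e + g e) x = G.boundary τ f x + G.boundary τ g x := by
  unfold boundary
  rw [← Finset.sum_add_distrib]
  refine Finset.sum_congr rfl fun e _ => ?_
  rw [← Finset.sum_add_distrib]
  refine Finset.sum_congr rfl fun b _ => ?_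
  split <;> simp [mul_add]

lemma boundary_single (τ : G.E → Bool → ℤ) (e : G.E) (c : ℤ) (x : G.V) :
    G.boundary τ (fun e' => if e' = e then c else 0) x
      = ∑ b : Bool, (if G.ends e b = x then τ e b * c else 0) := by
  unfold boundary
  rw [Finset.sum_eq_single e]
  · refine Finset.sum_congr rfl fun b _ => ?_
    simp
  · intro e' _ hne
    refine Finset.sum_eq_zero fun b _ => ?_
    simp [hne]
  · intro h; exact absurd (Finset.mem_univ e) h

lemma boundary_wflow {τ : G.E → Bool → ℤ} (hτ : G.IsOrientation τ) :
    ∀ {u v : G.V} (W : GWalk G u v) (a : ℤ) (x : G.V),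
    G.boundary τ (wflow τ W a) x
      = (if v = x then a * W.wsign G.sign else 0) - (if u = x then a else 0)
  | _, _, .nil v, a, x => by
      show G.boundary τ (fun _ => (0:ℤ)) x = _
      rw [boundary_zero]
      simp [GWalk.wsign]
  | _, w, .cons e b h rest, a, x => by
      subst h
      have hsq : ∀ b', τ e b' * τ e b' = 1 := by
        intro b'; rcases hτ.1 e b' with h' | h' <;> rw [h'] <;> norm_num
      have hpr : τ e true * τ e false = - G.sign e := hτ.2 e
      have key : G.boundary τ (wflow τ (GWalk.cons e b rfl rest) a) x
          = G.boundary τ (fun e' => if e' = e then -a * τ e b else 0) x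
            + G.boundary τ (wflow τ rest (a * G.sign e)) x := by
        rw [← boundary_add]
        rfl
      rw [key, boundary_single, Fintype.sum_bool,
        boundary_wflow hτ rest (a * G.sign e) x]
      have c1 : τ e b * (-a * τ e b) = -a := by
        rcases hτ.1 e b with h' | h' <;> rw [h'] <;> ring
      have c2 : τ e (!b) * (-a * τ e b) = a * G.sign e := by
        cases b
        · simpa using by linear_combination (-a) * hpr
        · simpa using by linear_combination (-a) * hpr
      show (if G.ends e true = x then τ e true * (-a * τ e b) else 0)
          + (if G.ends e false = x then τ e false * (-a * τ e b) else 0)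
          + ((if w = x then a * G.sign e * GWalk.wsign G.sign rest else 0)
            - (if G.ends e (!b) = x then a * G.sign e else 0))
        = (if w = x then a * (G.sign e * GWalk.wsign G.sign rest) else 0)
          - (if G.ends e b = x then a else 0)
      cases b
      · simp only [Bool.not_false]
        rw [c1]
        have c2' : τ e true * (-a * τ e false) = a * G.sign e := by
          linear_combination (-a) * hpr
        rw [c2']
        by_cases h1 : G.ends e true = x <;> by_cases h2 : G.ends e false = x <;>
          by_cases h3 : w = x <;> simp [h1, h2, h3] <;> ring
      · simp only [Bool.not_true]
        rw [c1]
        have c2' : τ e false * (-a * τ e true) = a * G.sign e := by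
          linear_combination (-a) * hpr
        rw [c2']
        by_cases h1 : G.ends e true = x <;> by_cases h2 : G.ends e false = x <;>
          by_cases h3 : w = x <;> simp [h1, h2, h3] <;> ring

lemma wflow_append (τ : G.E → Bool → ℤ) :
    ∀ {u v w : G.V} (W₁ : GWalk G u v) (W₂ : GWalk G v w) (a : ℤ) (e' : G.E),
    wflow τ (W₁.append W₂) a e' = wflow τ W₁ a e' + wflow τ W₂ (a * W₁.wsign G.sign) e'
  | _, _, _, .nil _, W₂, a, e' => by
      show wflow τ W₂ a e' = 0 + wflow τ W₂ (a * 1) e'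
      rw [mul_one, zero_add]
  | _, _, _, .cons e b h rest, W₂, a, e' => by
      show (if e' = e then -a * τ e b else 0) + wflow τ (rest.append W₂) (a * G.sign e) e' = _
      rw [wflow_append τ rest W₂ (a * G.sign e) e']
      show _ = (if e' = e then -a * τ e b else 0) + wflow τ rest (a * G.sign e) e'
        + wflow τ W₂ (a * (G.sign e * GWalk.wsign G.sign rest)) e'
      rw [add_assoc, mul_assoc]

lemma wflow_not_in (τ : G.E → Bool → ℤ) {S : Set G.E} {e₀ : G.E} (he : e₀ ∉ S) :
    ∀ {u v : G.V} (W : GWalk G u v) (a : ℤ), W.In S → wflow τ W a e₀ = 0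
  | _, _, .nil _, _, _ => rfl
  | _, _, .cons e b h rest, a, hin => by
      have : e₀ ≠ e := fun h' => he (h' ▸ hin.1)
      show (if e₀ = e then -a * τ e b else 0) + wflow τ rest (a * G.sign e) e₀ = 0
      rw [if_neg this, wflow_not_in τ he rest _ hin.2, add_zero]

lemma wflow_parity {τ : G.E → Bool → ℤ} (hτ : G.IsOrientation τ) (e₀ : G.E) :
    ∀ {u v : G.V} (W : GWalk G u v) (a : ℤ), (a = 1 ∨ a = -1) →
    ∃ m : ℤ, wflow τ W a e₀ = (W.cnt e₀ : ℤ) + 2 * m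
  | _, _, .nil _, a, _ => ⟨0, rfl⟩
  | _, _, .cons e b h rest, a, ha => by
      have ha' : a * G.sign e = 1 ∨ a * G.sign e = -1 := by
        rcases ha with h' | h' <;> rcases G.sign_unit e with h'' | h'' <;>
          rw [h', h''] <;> norm_num
      obtain ⟨m, hm⟩ := wflow_parity hτ e₀ rest (a * G.sign e) ha'
      show ∃ m' : ℤ, (if e₀ = e then -a * τ e b else 0) + wflow τ rest (a * G.sign e) e₀
        = (((if e = e₀ then 1 else 0) + rest.cnt e₀ : ℕ) : ℤ) + 2 * m'
      by_cases he : e₀ = e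
      · have hu : -a * τ e b = 1 ∨ -a * τ e b = -1 := by
          rcases ha with h' | h' <;> rcases hτ.1 e b with h'' | h'' <;>
            rw [h', h''] <;> norm_num
        rcases hu with hu | hu
        · refine ⟨m, ?_⟩
          rw [if_pos he, if_pos he.symm, hm, hu]
          push_cast; ring
        · refine ⟨m - 1, ?_⟩
          rw [if_pos he, if_pos he.symm, hm, hu]
          push_cast; ring
      · refine ⟨m, ?_⟩
        rw [if_neg he, if_neg (Ne.symm he), hm]
        push_cast; ring

/-- the switched half-edge orientation -/
def stau (τ : G.E → Bool → ℤ) (U : Set G.V) (e : G.E) (b : Bool) : ℤ :=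
  sgn U (G.ends e b) * τ e b

lemma stau_unit {τ : G.E → Bool → ℤ} (hτ : G.IsOrientation τ) (U : Set G.V)
    (e : G.E) (b : Bool) : stau τ U e b = 1 ∨ stau τ U e b = -1 := by
  unfold stau
  rcases sgn_unit U (G.ends e b) with h | h <;> rcases hτ.1 e b with h' | h' <;>
    rw [h, h'] <;> norm_num

lemma stau_mul {τ : G.E → Bool → ℤ} (hτ : G.IsOrientation τ) (U : Set G.V) (e : G.E) :
    stau τ U e true * stau τ U e false = - pswitch G.sign U e := by
  unfold stau
  rw [pswitch_eq_sgn]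
  have := hτ.2 e
  linear_combination sgn U (G.ends e true) * sgn U (G.ends e false) * this

lemma boundary_stau (τ : G.E → Bool → ℤ) (U : Set G.V) (f : G.E → ℤ) (v : G.V) :
    G.boundary (stau τ U) f v = sgn U v * G.boundary τ f v := by
  unfold boundary
  rw [Finset.mul_sum]
  refine Finset.sum_congr rfl fun e _ => ?_
  rw [Finset.mul_sum]
  refine Finset.sum_congr rfl fun b _ => ?_
  by_cases h : G.ends e b = v
  · rw [if_pos h, if_pos h]
    simp only [smul_eq_mul, stau, h]
    ring
  · rw [if_neg h, if_neg h, mul_zero]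

/-- sum of boundaries over a vertex set -/
lemma sum_boundary (τ : G.E → Bool → ℤ) (f : G.E → ℤ) (Ws : Finset G.V) :
    ∑ v ∈ Ws, G.boundary τ f v
      = ∑ e : G.E, ∑ b : Bool, (if G.ends e b ∈ Ws then τ e b * f e else 0) := by
  unfold boundary
  rw [Finset.sum_comm]
  refine Finset.sum_congr rfl fun e _ => ?_
  rw [Finset.sum_comm]
  refine Finset.sum_congr rfl fun b _ => ?_
  rw [Finset.sum_ite_eq Ws (G.ends e b) (fun _ => τ e b • f e)]
  simp

/-- balanced base-(2B+1) representations are unique -/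
lemma digits_zero (B : ℤ) (hB : 1 ≤ B) :
    ∀ (n : ℕ) (d : Fin n → ℤ), (∀ i, |d i| ≤ B) →
      (∑ i : Fin n, (2*B+1)^(i : ℕ) * d i) = 0 → ∀ i, d i = 0 := by
  intro n
  induction n with
  | zero => intro d _ _ i; exact absurd i.2 (by omega)
  | succ n ih =>
      intro d hd hsum i
      rw [Fin.sum_univ_succ] at hsum
      have h1 : ∑ i : Fin n, (2*B+1)^(i.succ : ℕ) * d i.succ
          = (2*B+1) * ∑ i : Fin n, (2*B+1)^(i : ℕ) * d i.succ := by
        rw [Finset.mul_sum]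
        refine Finset.sum_congr rfl fun j _ => ?_
        rw [Fin.val_succ, pow_succ]
        ring
      rw [h1] at hsum
      set T := ∑ i : Fin n, (2*B+1)^(i : ℕ) * d i.succ with hT
      simp only [Fin.val_zero, pow_zero, one_mul] at hsum
      have hd0 : d 0 = 0 ∧ T = 0 := by
        by_cases hT0 : T = 0
        · rw [hT0, mul_zero, add_zero] at hsum
          exact ⟨hsum, hT0⟩
        · exfalso
          have h2 : |d 0| = (2*B+1) * |T| := by
            have : d 0 = -((2*B+1) * T) := by linarith
            rw [this, abs_neg, abs_mul]
            congr 1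
            rw [abs_of_pos (by omega)]
          have h3 : 1 ≤ |T| := Int.one_le_abs hT0
          have h4 : |d 0| ≤ B := hd 0
          nlinarith
      have hrest := ih (fun i => d i.succ) (fun i => hd i.succ) hd0.2
      rcases Fin.eq_zero_or_eq_succ i with h | ⟨j, rfl⟩
      · rw [h]; exact hd0.1
      · exact hrest j

lemma boundary_finset_sum (τ : G.E → Bool → ℤ) {ι : Type} (s : Finset ι)
    (g : ι → G.E → ℤ) (x : G.V) :
    G.boundary τ (fun e => ∑ i ∈ s, g i e) x = ∑ i ∈ s, G.boundary τ (g i) x := by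
  classical
  induction s using Finset.induction with
  | empty => simp [boundary]
  | @insert a s hni ih =>
      have hfe : (fun e => ∑ i ∈ insert a s, g i e) = fun e => g a e + ∑ i ∈ s, g i e :=
        funext fun e => Finset.sum_insert hni
      rw [hfe, boundary_add, ih, Finset.sum_insert hni]

lemma boundary_smul (τ : G.E → Bool → ℤ) (c : ℤ) (f : G.E → ℤ) (x : G.V) :
    G.boundary τ (fun e => c * f e) x = c * G.boundary τ f x := by
  unfold boundary
  rw [Finset.mul_sum]
  refine Finset.sum_congr rfl fun e _ => ?_
  rw [Finset.mul_sum]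
  refine Finset.sum_congr rfl fun b _ => ?_
  split <;> simp <;> ring



/-- a canonical orientation -/
def tau0 (G : SignedGraph) : G.E → Bool → ℤ := fun e b => if b then 1 else -G.sign e

lemma tau0_orientation : G.IsOrientation G.tau0 := by
  constructor
  · intro e b
    cases b
    · rcases G.sign_unit e with h | h <;> simp [tau0, h]
    · simp [tau0]
  · intro e; simp [tau0]

lemma wsign_flip (e₀ : G.E) : ∀ {u v : G.V} (W : GWalk G u v),
    W.wsign (fun e => if e = e₀ then -G.sign e else G.sign e)
      = W.wsign G.sign * (-1)^(W.cnt e₀)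
  | _, _, .nil _ => by simp [GWalk.wsign, GWalk.cnt]
  | _, _, .cons e b h rest => by
      show (if e = e₀ then -G.sign e else G.sign e) * _ = (G.sign e * _) * _
      rw [wsign_flip e₀ rest, GWalk.cnt_cons]
      by_cases he : e = e₀
      · rw [if_pos he, if_pos he, pow_add, pow_one]
        ring
      · rw [if_neg he, if_neg he]
        simp only [Nat.zero_add]
        ring

lemma mem_component_edges {S : Set G.E} {v₀ : G.V} {e : G.E} (heS : e ∈ S) (b : Bool)
    (h : G.Reach S v₀ (G.ends e b)) : e ∈ (G.componentOf S v₀).edges := by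
  cases b
  · refine ⟨heS, Relation.EqvGen.trans _ _ _ h ?_⟩
    exact Relation.EqvGen.rel _ _ ⟨e, heS, false, rfl, rfl⟩
  · exact ⟨heS, h⟩

lemma walk_in_component {S : Set G.E} {v₀ : G.V} :
    ∀ {u x : G.V} (W : GWalk G u x), G.Reach S v₀ u → W.In S →
      W.In (G.componentOf S v₀).edges
  | _, _, .nil _, _, _ => trivial
  | _, _, .cons e b h rest, hu, hin => by
      refine ⟨mem_component_edges hin.1 b (h ▸ hu), ?_⟩
      refine walk_in_component rest ?_ hin.2
      exact Relation.EqvGen.trans _ _ _ hu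
        (Relation.EqvGen.symm _ _ (Relation.EqvGen.rel _ _ ⟨e, hin.1, !b, rfl, by rw [Bool.not_not, h]⟩))

lemma component_edges_subset {S : Set G.E} {v₀ : G.V} :
    (G.componentOf S v₀).edges ⊆ S := fun _ he => he.1

lemma tSG_switchSign (H : G.Subgraph) (U : Set G.V) (e : G.E) (he : e ∈ H.edges) :
    H.toSignedGraph.switchSign (fun x => x.1 ∈ U : Set H.toSignedGraph.V) ⟨e, he⟩
      = pswitch G.sign U e := rfl

lemma admissible_of_flows {τ : G.E → Bool → ℤ} (hτ : G.IsOrientation τ)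
    (h : ∀ e₀ : G.E, ∃ f : G.E → ℤ, (∀ v, G.boundary τ f v = 0) ∧ f e₀ ≠ 0) :
    G.FlowAdmissible := by
  choose F hF hFne using h
  set n := Fintype.card G.E with hn
  set ι : G.E ≃ Fin n := Fintype.equivFin G.E with hι
  set B : ℤ := 1 + ∑ e : G.E, ∑ e' : G.E, |F e e'| with hBdef
  have habs : ∀ e e', |F e e'| ≤ B := by
    intro e e'
    have h1 : |F e e'| ≤ ∑ e'' : G.E, |F e e''| :=
      Finset.single_le_sum (f := fun e'' => |F e e''|) (fun i _ => abs_nonneg _)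
        (Finset.mem_univ e')
    have h2 : ∑ e'' : G.E, |F e e''| ≤ ∑ a : G.E, ∑ e'' : G.E, |F a e''| :=
      Finset.single_le_sum (f := fun a => ∑ e'' : G.E, |F a e''|)
        (fun i _ => Finset.sum_nonneg fun _ _ => abs_nonneg _) (Finset.mem_univ e)
    omega
  have hB : 1 ≤ B := by
    have : (0:ℤ) ≤ ∑ e : G.E, ∑ e' : G.E, |F e e'| :=
      Finset.sum_nonneg fun _ _ => Finset.sum_nonneg fun _ _ => abs_nonneg _
    omega
  set M : ℤ := 2*B+1 with hM
  set f : G.E → ℤ := fun e' => ∑ e : G.E, M^((ι e : Fin n) : ℕ) * F e e' with hf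
  have hbd : ∀ v, G.boundary τ f v = 0 := by
    intro v
    have : G.boundary τ f v
        = ∑ e ∈ Finset.univ, G.boundary τ (fun e' => M^((ι e : Fin n) : ℕ) * F e e') v :=
      boundary_finset_sum τ Finset.univ (fun e e' => M^((ι e : Fin n) : ℕ) * F e e') v
    rw [this]
    refine Finset.sum_eq_zero fun e _ => ?_
    rw [boundary_smul, hF e v, mul_zero]
  have hnz : ∀ e', f e' ≠ 0 := by
    intro e' h0
    have hre : ∑ i : Fin n, M^(i:ℕ) * F (ι.symm i) e' = 0 := by
      rw [← h0, hf]
      exact (Fintype.sum_equiv ι _ _ (fun e => by rw [Equiv.symm_apply_apply])).symm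
    have hd := digits_zero B hB n (fun i => F (ι.symm i) e') (fun i => habs _ _) hre (ι e')
    rw [Equiv.symm_apply_apply] at hd
    exact hFne e' hd
  refine ⟨1 + ∑ e : G.E, |f e|, ?_, τ, f, ⟨⟨hτ, hbd⟩, ?_⟩⟩
  · have : (0:ℤ) ≤ ∑ e : G.E, |f e| := Finset.sum_nonneg fun _ _ => abs_nonneg _
    omega
  · intro e
    constructor
    · exact abs_pos.2 (hnz e)
    · have : |f e| ≤ ∑ e' : G.E, |f e'| :=
        Finset.single_le_sum (f := fun e' => |f e'|) (fun i _ => abs_nonneg _)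
          (Finset.mem_univ e)
      omega


lemma stau_pair_zero {τ : G.E → Bool → ℤ} (hτ : G.IsOrientation τ) (U : Set G.V) {e : G.E}
    (h : pswitch G.sign U e = 1) : stau τ U e true + stau τ U e false = 0 := by
  have hm := stau_mul hτ U e
  rw [h] at hm
  rcases stau_unit hτ U e true with h1 | h1 <;> rcases stau_unit hτ U e false with h2 | h2 <;>
    rw [h1, h2] at hm ⊢ <;> norm_num at hm <;> norm_num

lemma eps_ne_one_of_admissible (h : G.FlowAdmissible) : G.negativeness ≠ 1 := by
  intro h1
  obtain ⟨k, hk, τ, f, ⟨⟨hτ, hbd⟩, hbnd⟩⟩ := h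
  have hmem : (1:ℕ) ∈ {n | ∃ U : Set G.V, n = {e | G.switchSign U e = -1}.ncard} := by
    rw [← h1]
    exact Nat.sInf_mem ⟨_, ⟨∅, rfl⟩⟩
  obtain ⟨U, hU⟩ := hmem
  obtain ⟨estar, hstar⟩ := Set.ncard_eq_one.1 hU.symm
  have hbd' : ∀ v, G.boundary (stau τ U) f v = 0 := fun v => by
    rw [boundary_stau, hbd v, mul_zero]
  have hsum := sum_boundary (G := G) (stau τ U) f Finset.univ
  rw [Finset.sum_eq_zero (fun v _ => hbd' v)] at hsum
  have hsum2 : (0:ℤ) = ∑ e : G.E, (stau τ U e true * f e + stau τ U e false * f e) := by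
    rw [hsum]
    refine Finset.sum_congr rfl fun e _ => ?_
    rw [Fintype.sum_bool]
    simp
  rw [Finset.sum_eq_single estar (fun e _ hne => ?_) (fun h' => absurd (Finset.mem_univ _) h')]
    at hsum2
  · have hsw : G.switchSign U estar = -1 := by
      have : estar ∈ {e | G.switchSign U e = -1} := by rw [hstar]; exact rfl
      exact this
    have hm := stau_mul hτ U estar
    rw [← switchSign_eq_pswitch, hsw] at hm
    have hf0 : f estar = 0 := by
      rcases stau_unit hτ U estar true with h1 | h1 <;>
        rcases stau_unit hτ U estar false with h2 | h2 <;>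
        rw [h1, h2] at hm hsum2 <;> norm_num at hm <;> norm_num at hsum2 <;> omega
    have := (hbnd estar).1
    rw [hf0] at this
    norm_num at this
  · have hsw : pswitch G.sign U e = 1 := by
      have hne' : e ∉ {e | G.switchSign U e = -1} := by rw [hstar]; simpa using hne
      rcases switchSign_unit (G := G) U e with h' | h'
      · rw [← switchSign_eq_pswitch]; exact h'
      · exact absurd h' hne'
    have := stau_pair_zero hτ U hsw
    linear_combination f e * this

lemma no_bad_cut_of_admissible (h : G.FlowAdmissible) :
    ¬ ∃ e : G.E, G.IsCutEdge e ∧ ∃ b : Bool,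
      ((G.componentOf (Set.univ \ {e}) (G.ends e b)).toSignedGraph).negativeness = 0 := by
  rintro ⟨e₀, hcut, b, hbal⟩
  obtain ⟨k, hk, τ, f, ⟨⟨hτ, hbd⟩, hbnd⟩⟩ := h
  set S' : Set G.E := Set.univ \ {e₀} with hS'
  set H : G.Subgraph := G.componentOf S' (G.ends e₀ b) with hH
  obtain ⟨U', hU'⟩ := balanced_spec (G := H.toSignedGraph) hbal
  set U : Set G.V := {v | ∃ h : v ∈ H.verts, (⟨v, h⟩ : H.toSignedGraph.V) ∈ U'} with hUdef
  have hclaim : (fun x => x.1 ∈ U : Set H.toSignedGraph.V) = U' := by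
    ext x
    constructor
    · rintro ⟨h', hh⟩
      exact hh
    · intro hx
      exact ⟨x.2, hx⟩
  have hpos : ∀ e, e ∈ H.edges → pswitch G.sign U e = 1 := fun e he => by
    rw [← tSG_switchSign H U e he, hclaim]
    exact hU' ⟨e, he⟩
  have hbd' : ∀ v, G.boundary (stau τ U) f v = 0 := fun v => by
    rw [boundary_stau, hbd v, mul_zero]
  set Ws : Finset G.V := Set.Finite.toFinset (Set.toFinite H.verts) with hWs
  have hWsmem : ∀ v, v ∈ Ws ↔ v ∈ H.verts := fun v => Set.Finite.mem_toFinset _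
  have h0 : (0:ℤ) = ∑ e : G.E, ∑ b' : Bool,
      (if G.ends e b' ∈ Ws then stau τ U e b' * f e else 0) := by
    rw [← sum_boundary]
    exact (Finset.sum_eq_zero fun v _ => hbd' v).symm
  have hvb : G.ends e₀ b ∈ H.verts := Relation.EqvGen.refl _
  have hvnb : G.ends e₀ (!b) ∉ H.verts := by
    intro hx
    have hx' : G.Reach S' (G.ends e₀ b) (G.ends e₀ (!b)) := hx
    apply hcut.2
    cases b
    · exact Relation.EqvGen.symm _ _ hx'
    · exact hx'
  rw [Finset.sum_eq_single e₀ (fun e _ hne => ?_) (fun h' => absurd (Finset.mem_univ _) h')]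
    at h0
  · have hne0 : f e₀ ≠ 0 := by
      intro hf0
      have := (hbnd e₀).1
      rw [hf0] at this
      norm_num at this
    rw [Fintype.sum_bool] at h0
    cases b
    · simp only [Bool.not_false] at hvnb
      rw [if_pos ((hWsmem _).2 hvb), if_neg (fun hc => hvnb ((hWsmem _).1 hc))] at h0
      rcases stau_unit hτ U e₀ false with h1 | h1 <;> rw [h1] at h0 <;>
        simp at h0 <;> omega
    · simp only [Bool.not_true] at hvnb
      rw [if_pos ((hWsmem _).2 hvb), if_neg (fun hc => hvnb ((hWsmem _).1 hc))] at h0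
      rcases stau_unit hτ U e₀ true with h1 | h1 <;> rw [h1] at h0 <;>
        simp at h0 <;> omega
  · by_cases hmem : e ∈ H.edges
    · rw [Fintype.sum_bool, if_pos ((hWsmem _).2 (H.ends_mem e hmem true)),
        if_pos ((hWsmem _).2 (H.ends_mem e hmem false))]
      have := stau_pair_zero hτ U (hpos e hmem)
      linear_combination f e * this
    · have hnomem : ∀ b', G.ends e b' ∉ Ws := by
        intro b' hc
        exact hmem (mem_component_edges ⟨trivial, by simpa using hne⟩ b' ((hWsmem _).1 hc))
      rw [Fintype.sum_bool, if_neg (hnomem true), if_neg (hnomem false), add_zero]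


lemma neg_walk_of_unbalanced {S : Set G.E} {v₀ : G.V}
    (h : (G.componentOf S v₀).toSignedGraph.negativeness ≠ 0) :
    ∃ v : G.V, G.Reach S v₀ v ∧
      Nonempty {W : GWalk G v v // W.In S ∧ W.wsign G.sign = -1} := by
  by_contra hno
  push_neg at hno
  set H := G.componentOf S v₀ with hH
  have hall : ∀ (v : G.V) (W : GWalk G v v), W.In H.edges → W.wsign G.sign = 1 := by
    intro v W hin
    rcases GWalk.wsign_unit G.sign_unit W with hs | hs
    · exact hs
    · exfalso
      have hreach : G.Reach S v₀ v := by
        cases W with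
        | nil _ => rw [GWalk.wsign_nil] at hs; norm_num at hs
        | cons e b hh rest =>
            have hm := H.ends_mem e hin.1 b
            rw [hh] at hm
            exact hm
      exact (hno v hreach).false ⟨W, GWalk.In_mono component_edges_subset W hin, hs⟩
  obtain ⟨U, hU⟩ := harary G.sign_unit H.edges v₀ hall
  apply h
  have hpos : ∀ ee : H.toSignedGraph.E,
      H.toSignedGraph.switchSign (fun x => x.1 ∈ U : Set H.toSignedGraph.V) ee = 1 := by
    rintro ⟨e, he⟩
    rw [tSG_switchSign H U e he]
    refine hU e he ?_
    obtain ⟨W, hW⟩ := walk_of_reach he.2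
    exact reach_of_walk W (walk_in_component W (Relation.EqvGen.refl v₀) hW)
  have hle := negativeness_le (G := H.toSignedGraph) (fun x => x.1 ∈ U)
  have hempty : {ee | H.toSignedGraph.switchSign
      (fun x => x.1 ∈ U : Set H.toSignedGraph.V) ee = -1} = ∅ := by
    ext ee
    simp [hpos ee]
  rw [hempty] at hle
  simpa using hle

lemma exists_flow_through (hconn : G.Connected) (h1 : G.negativeness ≠ 1)
    (h2 : ¬ ∃ e : G.E, G.IsCutEdge e ∧ ∃ b : Bool,
      ((G.componentOf (Set.univ \ {e}) (G.ends e b)).toSignedGraph).negativeness = 0)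
    (e₀ : G.E) :
    ∃ f : G.E → ℤ, (∀ v, G.boundary G.tau0 f v = 0) ∧ f e₀ ≠ 0 := by
  have hτ := G.tau0_orientation
  have hs₀ := G.sign_unit e₀
  set S' : Set G.E := Set.univ \ {e₀} with hS'
  have he₀S' : e₀ ∉ S' := by simp [hS']
  by_cases hcut : G.IsCutEdge e₀
  · have hunb : ∀ b : Bool,
        (G.componentOf S' (G.ends e₀ b)).toSignedGraph.negativeness ≠ 0 :=
      fun b hb => h2 ⟨e₀, hcut, b, hb⟩
    obtain ⟨vt, hvt, ⟨⟨Wt, hWtIn, hWts⟩⟩⟩ := neg_walk_of_unbalanced (hunb true)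
    obtain ⟨vf, hvf, ⟨⟨Wf, hWfIn, hWfs⟩⟩⟩ := neg_walk_of_unbalanced (hunb false)
    obtain ⟨Qt, hQtIn⟩ := walk_of_reach hvt
    obtain ⟨Qf, hQfIn⟩ := walk_of_reach hvf
    set T : GWalk G (G.ends e₀ true) (G.ends e₀ true) :=
      Qt.append (Wt.append Qt.reverse) with hT
    set Mw : GWalk G (G.ends e₀ false) (G.ends e₀ false) :=
      Qf.append (Wf.append Qf.reverse) with hM
    have hTIn : T.In S' := by
      rw [hT, GWalk.In_append, GWalk.In_append, GWalk.In_reverse]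
      exact ⟨hQtIn, hWtIn, hQtIn⟩
    have hMIn : Mw.In S' := by
      rw [hM, GWalk.In_append, GWalk.In_append, GWalk.In_reverse]
      exact ⟨hQfIn, hWfIn, hQfIn⟩
    have hTs : T.wsign G.sign = -1 := by
      rw [hT, GWalk.wsign_append, GWalk.wsign_append, GWalk.wsign_reverse, hWts]
      rcases GWalk.wsign_unit G.sign_unit Qt with hq | hq <;> rw [hq] <;> norm_num
    have hMs : Mw.wsign G.sign = -1 := by
      rw [hM, GWalk.wsign_append, GWalk.wsign_append, GWalk.wsign_reverse, hWfs]
      rcases GWalk.wsign_unit G.sign_unit Qf with hq | hq <;> rw [hq] <;> norm_num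
    set total : GWalk G (G.ends e₀ true) (G.ends e₀ true) :=
      GWalk.cons e₀ true rfl (Mw.append (GWalk.cons e₀ false rfl T)) with htotal
    have htots : total.wsign G.sign = 1 := by
      rw [htotal, GWalk.wsign_cons, GWalk.wsign_append, GWalk.wsign_cons, hMs, hTs]
      rcases hs₀ with h' | h' <;> rw [h'] <;> norm_num
    refine ⟨wflow G.tau0 total 1, fun v => ?_, ?_⟩
    · rw [boundary_wflow hτ total 1 v, htots]
      simp
    · have hv1 : wflow G.tau0 total 1 e₀
          = (if e₀ = e₀ then -1 * G.tau0 e₀ true else 0)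
            + wflow G.tau0 (Mw.append (GWalk.cons e₀ false rfl T)) (1 * G.sign e₀) e₀ := rfl
      rw [hv1, if_pos rfl, wflow_append, wflow_not_in G.tau0 he₀S' Mw _ hMIn]
      have hv2 : wflow G.tau0 (GWalk.cons e₀ false rfl T)
            (1 * G.sign e₀ * Mw.wsign G.sign) e₀
          = (if e₀ = e₀ then -(1 * G.sign e₀ * Mw.wsign G.sign) * G.tau0 e₀ false else 0)
            + wflow G.tau0 T (1 * G.sign e₀ * Mw.wsign G.sign * G.sign e₀) e₀ := rfl
      rw [hv2, if_pos rfl, wflow_not_in G.tau0 he₀S' T _ hTIn, hMs]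
      have ht1 : G.tau0 e₀ true = 1 := rfl
      have ht2 : G.tau0 e₀ false = -G.sign e₀ := rfl
      rw [ht1, ht2]
      rcases hs₀ with h' | h' <;> rw [h'] <;> norm_num
  · have hreach : G.Reach S' (G.ends e₀ true) (G.ends e₀ false) := by
      by_contra hr
      exact hcut ⟨trivial, hr⟩
    obtain ⟨R, hRIn⟩ := walk_of_reach (Relation.EqvGen.symm _ _ hreach)
    set C : GWalk G (G.ends e₀ true) (G.ends e₀ true) := GWalk.cons e₀ true rfl R with hC
    have hCcnt : C.cnt e₀ = 1 := by
      rw [hC, GWalk.cnt_cons, if_pos rfl, GWalk.cnt_eq_zero he₀S' R hRIn]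
    by_cases hCs : C.wsign G.sign = 1
    · refine ⟨wflow G.tau0 C 1, fun v => ?_, ?_⟩
      · rw [boundary_wflow hτ C 1 v, hCs]
        simp
      · have hv1 : wflow G.tau0 C 1 e₀
            = (if e₀ = e₀ then -1 * G.tau0 e₀ true else 0)
              + wflow G.tau0 R (1 * G.sign e₀) e₀ := rfl
        rw [hv1, if_pos rfl, wflow_not_in G.tau0 he₀S' R _ hRIn]
        have ht1 : G.tau0 e₀ true = 1 := rfl
        rw [ht1]
        norm_num
    · have hCs' : C.wsign G.sign = -1 := by
        rcases GWalk.wsign_unit G.sign_unit C with h' | h'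
        · exact absurd h' hCs
        · exact h'
      have hnb : G.negativeness ≠ 0 := by
        intro h0
        exact hCs (closed_walk_pos_of_balanced h0 C)
      have hZ : ∃ v : G.V, Nonempty {Z : GWalk G v v //
          Z.wsign G.sign = -1 ∧ Even (Z.cnt e₀)} := by
        by_contra hno
        push_neg at hno
        set σ' : G.E → ℤ := fun e => if e = e₀ then -G.sign e else G.sign e with hσ'
        have hσ'u : ∀ e, σ' e = 1 ∨ σ' e = -1 := by
          intro e
          by_cases he : e = e₀
          · subst he
            rcases G.sign_unit e with h' | h' <;> simp [hσ', h']
          · rcases G.sign_unit e with h' | h' <;> simp [hσ', he, h']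
        have hall : ∀ (v : G.V) (Z : GWalk G v v), Z.In Set.univ → Z.wsign σ' = 1 := by
          intro v Z _
          rcases GWalk.wsign_unit G.sign_unit Z with hs | hs
          · by_cases hev : Even (Z.cnt e₀)
            · rw [hσ', wsign_flip e₀ Z, hs, Even.neg_one_pow hev, one_mul]
            · exfalso
              obtain ⟨P, hPIn⟩ := walk_of_reach (hconn v (G.ends e₀ true))
              set Z' := Z.append (P.append (C.append P.reverse)) with hZ'
              refine (not_isEmpty_iff.2 ?_) (hno v)
              refine ⟨⟨Z', ?_, ?_⟩⟩
              · rw [hZ', GWalk.wsign_append, GWalk.wsign_append, GWalk.wsign_append,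
                  GWalk.wsign_reverse, hs, hCs']
                rcases GWalk.wsign_unit G.sign_unit P with hp | hp <;> rw [hp] <;> norm_num
              · rw [hZ', GWalk.cnt_append, GWalk.cnt_append, GWalk.cnt_append,
                  GWalk.cnt_reverse, hCcnt]
                rw [Nat.even_iff] at hev ⊢
                omega
          · have hev : ¬ Even (Z.cnt e₀) := fun hev => (hno v).false ⟨Z, hs, hev⟩
            rw [hσ', wsign_flip e₀ Z, hs, Odd.neg_one_pow (Nat.not_even_iff_odd.1 hev)]
            norm_num
        obtain ⟨U, hU⟩ := harary hσ'u Set.univ (G.ends e₀ true) hall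
        have hsub : {e | G.switchSign U e = -1} ⊆ {e₀} := by
          intro e he
          by_contra hne
          have hne' : e ≠ e₀ := by simpa using hne
          have h1' : pswitch σ' U e = 1 := hU e (Set.mem_univ e) (hconn _ _)
          have h2' : pswitch G.sign U e = pswitch σ' U e := by
            unfold pswitch
            rw [show σ' e = G.sign e from by rw [hσ']; simp [hne']]
          rw [Set.mem_setOf_eq, switchSign_eq_pswitch, h2', h1'] at he
          norm_num at he
        have hle : G.negativeness ≤ 1 := by
          have hn1 := negativeness_le (G := G) U
          have hcard : {e | G.switchSign U e = -1}.ncard ≤ 1 := by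
            have := Set.ncard_le_ncard hsub (Set.finite_singleton e₀)
            simpa using this
          omega
        omega
      obtain ⟨v, ⟨⟨Z, hZs, hZev⟩⟩⟩ := hZ
      obtain ⟨P, hPIn⟩ := walk_of_reach (hconn (G.ends e₀ true) v)
      set D := P.append (Z.append P.reverse) with hD
      set total : GWalk G (G.ends e₀ true) (G.ends e₀ true) :=
        GWalk.cons e₀ true rfl (R.append D) with htotal
      have hCs2 : G.sign e₀ * R.wsign G.sign = -1 := hCs'
      have hp2 : P.wsign G.sign * P.wsign G.sign = 1 := by
        rcases GWalk.wsign_unit G.sign_unit P with hp | hp <;> rw [hp] <;> norm_num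
      have htots : total.wsign G.sign = 1 := by
        rw [htotal, GWalk.wsign_cons, GWalk.wsign_append, hD, GWalk.wsign_append,
          GWalk.wsign_append, GWalk.wsign_reverse, hZs]
        linear_combination (-(P.wsign G.sign * P.wsign G.sign)) * hCs2 + hp2
      refine ⟨wflow G.tau0 total 1, fun v' => ?_, ?_⟩
      · rw [boundary_wflow hτ total 1 v', htots]
        simp
      · obtain ⟨m, hm⟩ := wflow_parity hτ e₀ total 1 (Or.inl rfl)
        have hcnt : total.cnt e₀ = 1 + (R.cnt e₀ + D.cnt e₀) := by
          rw [htotal, GWalk.cnt_cons, if_pos rfl, GWalk.cnt_append]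
        have hR0 : R.cnt e₀ = 0 := GWalk.cnt_eq_zero he₀S' R hRIn
        have hDcnt : D.cnt e₀ = P.cnt e₀ + (Z.cnt e₀ + P.cnt e₀) := by
          rw [hD, GWalk.cnt_append, GWalk.cnt_append, GWalk.cnt_reverse]
        obtain ⟨t, ht⟩ := hZev
        intro hzero
        rw [hzero] at hm
        omega


end SignedGraph

/-- Bouchet's characterization of flow-admissibility. -/
theorem flow_admissible_iff (G : SignedGraph) (hconn : G.Connected) :
    G.FlowAdmissible ↔
      (G.negativeness ≠ 1 ∧
        ¬ ∃ e : G.E, G.IsCutEdge e ∧ ∃ b : Bool,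
          ((G.componentOf (Set.univ \ {e}) (G.ends e b)).toSignedGraph).negativeness
            = 0) := by
  constructor
  · intro h
    exact ⟨SignedGraph.eps_ne_one_of_admissible h, SignedGraph.no_bad_cut_of_admissible h⟩
  · rintro ⟨h1, h2⟩
    exact SignedGraph.admissible_of_flows G.tau0_orientation
      (SignedGraph.exists_flow_through hconn h1 h2)
end
end
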